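/- arXiv:1810.09526 — 6 statements merged into one kernel-verified Lean document; each statement's English description precedes it below -/
import Mathlib

section
/- For every dimension d ≥ 1 there exists a finite constant C = C(d) such that for any ℓ ∈ ℕ there exists a flow φ_ℓ in ℤ^d connecting the point mass at 0 to q_ℓ, with support contained in Λ_{2ℓ−1}, satisfying Σ_{z∈ℤ^d, b∈B} φ_ℓ(z;b)² ≤ C g_d(ℓ) and Σ_{z∈ℤ^d, b∈B} |φ_ℓ(z;b)| ≤ C ℓ. -/
open Finset Real

/-- The canonical basis vector `e_i` of `ℤ^d`. -/
def eZ (d : ℕ) (i : Fin d) : Fin d → ℤ := fun j => if j = i then 1 else 0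

/-- The cube `Λ_ℓ = {z ∈ ℤ^d : 0 ≤ z_i ≤ ℓ-1}`. -/
noncomputable def Lam (d ℓ : ℕ) : Finset (Fin d → ℤ) := Fintype.piFinset fun _ => Finset.Icc 0 ((ℓ : ℤ) - 1)

/-- The uniform probability measure `p_ℓ` on `Λ_ℓ`. -/
noncomputable def punif (d ℓ : ℕ) (z : Fin d → ℤ) : ℝ :=
  if z ∈ Lam d ℓ then ((ℓ : ℝ) ^ d)⁻¹ else 0

/-- The convolution `q_ℓ = p_ℓ ∗ p_ℓ` (`p_ℓ` vanishes outside `Λ_ℓ`, so the sum is finite). -/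
noncomputable def qconv (d ℓ : ℕ) (z : Fin d → ℤ) : ℝ :=
  ∑ y ∈ Lam d ℓ, punif d ℓ y * punif d ℓ (z - y)

/-- The point mass at the origin of `ℤ^d`. -/
def delta0 (d : ℕ) (z : Fin d → ℤ) : ℝ := if z = 0 then 1 else 0

/-- The support of the flow `φ` is contained in `Λ`. -/
def SupportedIn (d : ℕ) (φ : (Fin d → ℤ) → Fin d → ℝ) (Λ : Finset (Fin d → ℤ)) : Prop :=
  ∀ z i, φ z i ≠ 0 → z ∈ Λ ∧ z + eZ d i ∈ Λ

/-- The flow `φ` connects `p` to `q`: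
`p(z) - q(z) = Σ_b (φ(z;b) - φ(z-b;b))` for every `z ∈ ℤ^d`. -/
def Connects (d : ℕ) (φ : (Fin d → ℤ) → Fin d → ℝ) (p q : (Fin d → ℤ) → ℝ) : Prop :=
  ∀ z, p z - q z = ∑ i : Fin d, (φ z i - φ (z - eZ d i) i)

/-- `g_d(ℓ) = ℓ` if `d = 1`, `log ℓ` if `d = 2`, `1` if `d ≥ 3`. -/
noncomputable def gd (d ℓ : ℕ) : ℝ := if d = 1 then (ℓ : ℝ) else if d = 2 then Real.log ℓ else 1

/-!
The flow is built by interpolating between `δ₀` and `q_ℓ` through product measures. Along each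
axis take the densities `ρ₀ = δ₀`, `ρ_k` uniform on `{0, …, min(2^k, ℓ) - 1}` for
`k ≤ K = ⌈log₂ ℓ⌉` (so `ρ_K` is the one-dimensional `p_ℓ`), and `ρ_{K+1} = p_ℓ ∗ p_ℓ`. The
measure `ρ_k^{⊗d}` is moved to `ρ_{k+1}^{⊗d}` one coordinate at a time: in direction `c` the flow
is the difference of the distribution functions of `ρ_k` and `ρ_{k+1}` in coordinate `c`, times
`ρ_{k+1}` in the earlier and `ρ_k` in the later coordinates. This step flow has `ℓ¹`-norm at most
`2^{k+1}` and sup-norm at most `(4/2^k)^{d-1}`. Summing over `k` gives the `ℓ¹` bound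
`O(2^K) = O(ℓ)`; bounding the product of two step flows by the sup-norm of the finer one times the
`ℓ¹`-norm of the coarser one gives the energy bound `O(∑_{k ≤ K} 2^{k(2-d)})`, which is `O(ℓ)`,
`O(log ℓ)` or `O(1)`.
-/

section

variable {d : ℕ}

theorem Connects.add {φ ψ : (Fin d → ℤ) → Fin d → ℝ} {p q r : (Fin d → ℤ) → ℝ}
    (hφ : Connects d φ p q) (hψ : Connects d ψ q r) :
    Connects d (fun z i => φ z i + ψ z i) p r := fun z => by
  rw [← sub_add_sub_cancel (p z) (q z), hφ z, hψ z, ← sum_add_distrib]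
  exact sum_congr rfl fun i _ => by ring

theorem connects_sum_range (φ : ℕ → (Fin d → ℤ) → Fin d → ℝ) (P : ℕ → (Fin d → ℤ) → ℝ)
    (n : ℕ) (h : ∀ k < n, Connects d (φ k) (P k) (P (k + 1))) :
    Connects d (fun z i => ∑ k ∈ range n, φ k z i) (P 0) (P n) := by
  induction n with
  | zero => intro z; simp
  | succ n ih =>
    simp only [sum_range_succ]
    exact Connects.add (ih fun k hk => h k (by omega)) (h n (by omega))

theorem mem_Lam {n : ℕ} {z : Fin d → ℤ} : z ∈ Lam d n ↔ ∀ j, 0 ≤ z j ∧ z j ≤ n - 1 := by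
  simp [Lam]

end

theorem gd_nonneg (d ℓ : ℕ) : 0 ≤ gd d ℓ := by
  unfold gd
  split_ifs
  · positivity
  · exact Real.log_natCast_nonneg ℓ
  · exact zero_le_one

theorem SupportedIn.finsum_eq_sum {d : ℕ} {φ : (Fin d → ℤ) → Fin d → ℝ}
    {Λ : Finset (Fin d → ℤ)} (h : SupportedIn d φ Λ) (F : ℝ → ℝ) (hF : F 0 = 0) :
    ∑ᶠ z, ∑ i, F (φ z i) = ∑ z ∈ Λ, ∑ i, F (φ z i) :=
  finsum_eq_sum_of_support_subset _ fun z hz => by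
    obtain ⟨i, -, hi⟩ := exists_ne_zero_of_sum_ne_zero hz
    exact (h z i fun h0 => hi (by rw [h0, hF])).1

namespace LatticeFlow

noncomputable def unif (s : ℕ) (x : ℤ) : ℝ := if x ∈ Icc 0 ((s : ℤ) - 1) then (s : ℝ)⁻¹ else 0

noncomputable def tri (ℓ : ℕ) (x : ℤ) : ℝ := ∑ y ∈ Icc 0 ((ℓ : ℤ) - 1), unif ℓ y * unif ℓ (x - y)

noncomputable def cdf (f : ℤ → ℝ) (x : ℤ) : ℝ := ∑ y ∈ Icc 0 x, f y

structure IsProbOn (f : ℤ → ℝ) (n : ℤ) : Prop where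
  nonneg : ∀ x, 0 ≤ f x
  eq_zero_of_notMem : ∀ x ∉ Icc 0 n, f x = 0
  sum_eq_one : ∑ x ∈ Icc 0 n, f x = 1

namespace IsProbOn

variable {f g : ℤ → ℝ} {n m : ℤ}

theorem sum_eq_one_of_subset (hf : IsProbOn f n) {T : Finset ℤ} (hT : Icc 0 n ⊆ T) :
    ∑ x ∈ T, f x = 1 :=
  (sum_subset hT fun x _ hx => hf.eq_zero_of_notMem x hx).symm.trans hf.sum_eq_one

theorem sum_le_one (hf : IsProbOn f n) (T : Finset ℤ) : ∑ x ∈ T, f x ≤ 1 :=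
  calc ∑ x ∈ T, f x ≤ ∑ x ∈ T ∪ Icc 0 n, f x :=
        sum_le_sum_of_subset_of_nonneg subset_union_left fun x _ _ => hf.nonneg x
    _ = 1 := hf.sum_eq_one_of_subset subset_union_right

theorem sum_abs_le_one (hf : IsProbOn f n) (T : Finset ℤ) : ∑ x ∈ T, |f x| ≤ 1 := by
  simpa only [abs_of_nonneg (hf.nonneg _)] using hf.sum_le_one T

theorem mono (hf : IsProbOn f n) (hnm : n ≤ m) : IsProbOn f m where
  nonneg := hf.nonneg
  eq_zero_of_notMem x hx := hf.eq_zero_of_notMem x fun h => hx (Icc_subset_Icc le_rfl hnm h)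
  sum_eq_one := hf.sum_eq_one_of_subset (Icc_subset_Icc le_rfl hnm)

theorem comp_sub (hf : IsProbOn f n) {y : ℤ} (hy : 0 ≤ y) :
    IsProbOn (fun x => f (x - y)) (n + y) where
  nonneg x := hf.nonneg (x - y)
  eq_zero_of_notMem x hx :=
    hf.eq_zero_of_notMem _ fun h => hx (by simp only [mem_Icc] at h ⊢; omega)
  sum_eq_one := by
    rw [← hf.sum_eq_one_of_subset (T := (Icc 0 (n + y)).image (· - y))]
    · exact (sum_image fun a _ b _ h => sub_left_injective h).symm
    · intro x hx
      simp only [mem_Icc, mem_image] at hx ⊢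
      exact ⟨x + y, by omega, by ring⟩

theorem conv (hf : IsProbOn f n) (hg : IsProbOn g m) :
    IsProbOn (fun x => ∑ y ∈ Icc 0 n, f y * g (x - y)) (n + m) where
  nonneg x := sum_nonneg fun y _ => mul_nonneg (hf.nonneg y) (hg.nonneg _)
  eq_zero_of_notMem x hx := sum_eq_zero fun y hy => by
    rw [hg.eq_zero_of_notMem, mul_zero]
    simp only [mem_Icc] at hx hy ⊢
    omega
  sum_eq_one := by
    rw [sum_comm, ← hf.sum_eq_one]
    refine sum_congr rfl fun y hy => ?_
    rw [← mul_sum, ((hg.comp_sub (mem_Icc.1 hy).1).mono _).sum_eq_one, mul_one]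
    simp only [mem_Icc] at hy
    omega

theorem conv_le (hf : IsProbOn f n) {c : ℝ} (hg : ∀ x, g x ≤ c) (x : ℤ) :
    ∑ y ∈ Icc 0 n, f y * g (x - y) ≤ c :=
  calc ∑ y ∈ Icc 0 n, f y * g (x - y) ≤ ∑ y ∈ Icc 0 n, f y * c :=
        sum_le_sum fun y _ => mul_le_mul_of_nonneg_left (hg _) (hf.nonneg y)
    _ = c := by rw [← sum_mul, hf.sum_eq_one, one_mul]

theorem cdf_nonneg (hf : IsProbOn f n) (x : ℤ) : 0 ≤ cdf f x :=
  sum_nonneg fun y _ => hf.nonneg y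

theorem cdf_le_one (hf : IsProbOn f n) (x : ℤ) : cdf f x ≤ 1 :=
  hf.sum_le_one _

theorem cdf_eq_one (hf : IsProbOn f n) {x : ℤ} (hx : n ≤ x) : cdf f x = 1 :=
  hf.sum_eq_one_of_subset (Icc_subset_Icc le_rfl hx)

theorem cdf_sub_cdf_sub_one (hf : IsProbOn f n) (x : ℤ) : cdf f x - cdf f (x - 1) = f x := by
  rcases lt_or_ge x 0 with hx | hx
  · rw [hf.eq_zero_of_notMem x (by simp [hx]), cdf, cdf, Icc_eq_empty (by omega),
      Icc_eq_empty (by omega), sub_self]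
  · rw [cdf, cdf, ← insert_Icc_sub_one_right_eq_Icc hx, sum_insert (by simp),
      add_sub_cancel_right]

variable (hf : IsProbOn f n) (hg : IsProbOn g n)
include hf hg

theorem abs_cdf_sub_cdf_le_one (x : ℤ) : |cdf f x - cdf g x| ≤ 1 := by
  rw [abs_sub_le_iff]
  constructor <;> linarith [hf.cdf_nonneg x, hf.cdf_le_one x, hg.cdf_nonneg x, hg.cdf_le_one x]

theorem cdf_sub_cdf_eq_zero {x : ℤ} (hx : x ∉ Icc 0 (n - 1)) : cdf f x - cdf g x = 0 := by
  rcases lt_or_ge x 0 with h | h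
  · simp [cdf, Icc_eq_empty_of_lt h]
  · rw [hf.cdf_eq_one (by simp only [mem_Icc] at hx; omega),
      hg.cdf_eq_one (by simp only [mem_Icc] at hx; omega), sub_self]

theorem sum_abs_cdf_sub_cdf_le (T : Finset ℤ) : ∑ x ∈ T, |cdf f x - cdf g x| ≤ n := by
  have hn : 0 ≤ n := by
    by_contra h
    have := hf.sum_eq_one
    rw [Icc_eq_empty (by omega), sum_empty] at this
    exact zero_ne_one this
  calc ∑ x ∈ T, |cdf f x - cdf g x| ≤ ∑ x ∈ T ∪ Icc 0 (n - 1), |cdf f x - cdf g x| :=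
        sum_le_sum_of_subset_of_nonneg subset_union_left fun x _ _ => abs_nonneg _
    _ = ∑ x ∈ Icc 0 (n - 1), |cdf f x - cdf g x| := by
        refine (sum_subset subset_union_right fun x _ hx => ?_).symm
        rw [cdf_sub_cdf_eq_zero hf hg hx, abs_zero]
    _ ≤ ∑ x ∈ Icc 0 (n - 1), 1 := sum_le_sum fun x _ => abs_cdf_sub_cdf_le_one hf hg x
    _ = n := by
        rw [sum_const, Int.card_Icc, nsmul_one, show n - 1 + 1 - 0 = n by ring]
        exact_mod_cast Int.toNat_of_nonneg hn

end IsProbOn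

theorem isProbOn_unif {s : ℕ} (hs : 1 ≤ s) : IsProbOn (unif s) (s - 1) where
  nonneg x := by unfold unif; split <;> positivity
  eq_zero_of_notMem x hx := if_neg hx
  sum_eq_one := by
    rw [sum_congr rfl fun x hx => by rw [unif, if_pos hx]]
    simp [Int.card_Icc, show (s : ℝ) ≠ 0 by positivity]

theorem unif_le (s : ℕ) (x : ℤ) : unif s x ≤ (s : ℝ)⁻¹ := by
  unfold unif; split <;> simp

theorem isProbOn_tri {ℓ : ℕ} (hℓ : 1 ≤ ℓ) : IsProbOn (tri ℓ) (2 * ℓ - 2) :=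
  ((isProbOn_unif hℓ).conv (isProbOn_unif hℓ)).mono (by omega)

theorem tri_le {ℓ : ℕ} (hℓ : 1 ≤ ℓ) (x : ℤ) : tri ℓ x ≤ (ℓ : ℝ)⁻¹ :=
  (isProbOn_unif hℓ).conv_le (unif_le ℓ) x

theorem tri_one : tri 1 = unif 1 := by
  ext x
  simp [tri, unif]

section

variable {d : ℕ}

noncomputable def prodDensity (d : ℕ) (f : ℤ → ℝ) (z : Fin d → ℤ) : ℝ := ∏ j, f (z j)

theorem prodDensity_unif_one : prodDensity d (unif 1) = delta0 d := by
  ext z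
  simp [prodDensity, unif, delta0, Fintype.prod_boole, funext_iff]

theorem prodDensity_unif (ℓ : ℕ) : prodDensity d (unif ℓ) = punif d ℓ := by
  ext y
  simp only [prodDensity, unif, punif, Lam, Fintype.mem_piFinset]
  rw [Fintype.prod_ite_zero]
  simp

theorem prodDensity_tri (ℓ : ℕ) : prodDensity d (tri ℓ) = qconv d ℓ := by
  ext z
  simp only [qconv, ← prodDensity_unif, prodDensity, ← prod_mul_distrib, Lam, tri]
  exact prod_univ_sum (fun _ => Icc 0 ((ℓ : ℤ) - 1)) fun j x => unif ℓ x * unif ℓ (z j - x)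

def tensorFactor (f g h : ℤ → ℝ) (c j : Fin d) (x : ℤ) : ℝ :=
  if j < c then g x else if j = c then h x else f x

def tensorFlow (d : ℕ) (f g h : ℤ → ℝ) (z : Fin d → ℤ) (c : Fin d) : ℝ :=
  ∏ j, tensorFactor f g h c j (z j)

variable {f g h : ℤ → ℝ}

theorem connects_tensorFlow (hh : ∀ x, h x - h (x - 1) = f x - g x) :
    Connects d (tensorFlow d f g h) (prodDensity d f) (prodDensity d g) := by
  intro z
  let N (c : ℕ) : ℝ := ∏ j : Fin d, if (j : ℕ) < c then g (z j) else f (z j)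
  have hstep : ∀ c : Fin d,
      tensorFlow d f g h z c - tensorFlow d f g h (z - eZ d c) c = N c - N (c + 1) := by
    intro c
    set P := ∏ j ∈ univ.erase c, if j < c then g (z j) else f (z j)
    have split_off : ∀ F : Fin d → ℝ, (∀ j ≠ c, F j = if j < c then g (z j) else f (z j)) →
        ∏ j, F j = F c * P := fun F hF => by
      rw [← mul_prod_erase univ F (mem_univ c)]
      exact congrArg _ (prod_congr rfl fun j hj => hF j (ne_of_mem_erase hj))
    have hz : ∀ j ≠ c, (z - eZ d c) j = z j := fun j hj => by simp [eZ, hj]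
    simp only [N]
    rw [tensorFlow, tensorFlow, split_off _ fun j hj => by simp [tensorFactor, hj],
      split_off _ fun j hj => by simp [tensorFactor, hj, hz j hj],
      split_off _ fun j hj => by simp,
      split_off _ fun j hj => by simp [le_iff_lt_or_eq, Fin.val_ne_of_ne hj]]
    simp only [tensorFactor, lt_irrefl, lt_add_one, if_false, if_true]
    rw [show (z - eZ d c) c = z c - 1 by simp [eZ], ← sub_mul, ← sub_mul, hh]
  rw [sum_congr rfl fun c _ => hstep c, Fin.sum_univ_eq_sum_range (fun c => N c - N (c + 1)),
    sum_range_sub']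
  simp [N, prodDensity]

theorem abs_tensorFlow_le {B : ℝ} (hf : ∀ x, |f x| ≤ B) (hg : ∀ x, |g x| ≤ B)
    (hh : ∀ x, |h x| ≤ 1) (z : Fin d → ℤ) (c : Fin d) :
    |tensorFlow d f g h z c| ≤ B ^ (d - 1) := by
  have hB : 0 ≤ B := (abs_nonneg _).trans (hf 0)
  rw [tensorFlow, abs_prod, ← mul_prod_erase univ _ (mem_univ c)]
  calc |tensorFactor f g h c c (z c)| * ∏ j ∈ univ.erase c, |tensorFactor f g h c j (z j)|
      ≤ 1 * ∏ _j ∈ univ.erase c, B := by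
        refine mul_le_mul (by simpa [tensorFactor] using hh (z c))
          (prod_le_prod (fun _ _ => abs_nonneg _) fun j hj => ?_)
          (prod_nonneg fun _ _ => abs_nonneg _) zero_le_one
        simp only [tensorFactor, if_neg (ne_of_mem_erase hj)]
        split
        · exact hg _
        · exact hf _
    _ = B ^ (d - 1) := by simp [card_erase_of_mem]

theorem sum_abs_tensorFlow_le (S : Finset ℤ) {A : ℝ} (hf : ∑ x ∈ S, |f x| ≤ 1)
    (hg : ∑ x ∈ S, |g x| ≤ 1) (hh : ∑ x ∈ S, |h x| ≤ A) (c : Fin d) :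
    ∑ z ∈ Fintype.piFinset fun _ => S, |tensorFlow d f g h z c| ≤ A := by
  simp only [tensorFlow, abs_prod]
  rw [← prod_univ_sum (fun _ => S) fun j x => |tensorFactor f g h c j x|,
    ← mul_prod_erase univ _ (mem_univ c)]
  calc (∑ x ∈ S, |tensorFactor f g h c c x|) *
        ∏ j ∈ univ.erase c, ∑ x ∈ S, |tensorFactor f g h c j x|
      ≤ A * 1 := by
        refine mul_le_mul (by simpa [tensorFactor] using hh)
          (prod_le_one (fun _ _ => sum_nonneg fun _ _ => abs_nonneg _) fun j hj => ?_)
          (prod_nonneg fun _ _ => sum_nonneg fun _ _ => abs_nonneg _)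
          ((sum_nonneg fun _ _ => abs_nonneg _).trans hh)
        simp only [tensorFactor, if_neg (ne_of_mem_erase hj)]
        split
        · exact hg
        · exact hf
    _ = A := mul_one A

theorem mem_of_tensorFlow_ne_zero {T T' : Finset ℤ} (hf : ∀ x ∉ T, f x = 0)
    (hg : ∀ x ∉ T, g x = 0) (hh : ∀ x ∉ T', h x = 0) {z : Fin d → ℤ} {c : Fin d}
    (hz : tensorFlow d f g h z c ≠ 0) : (∀ j ≠ c, z j ∈ T) ∧ z c ∈ T' := by
  rw [tensorFlow, prod_ne_zero_iff] at hz
  refine ⟨fun j hj => ?_, ?_⟩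
  · have := hz j (mem_univ j)
    simp only [tensorFactor, if_neg hj] at this
    split at this
    · exact not_imp_comm.1 (hg _) this
    · exact not_imp_comm.1 (hf _) this
  · have := hz c (mem_univ c)
    simp only [tensorFactor, lt_irrefl, if_false, if_true] at this
    exact not_imp_comm.1 (hh _) this

end

theorem sq_sum_range_le (x : ℕ → ℝ) (n : ℕ) :
    (∑ k ∈ range n, x k) ^ 2 ≤ 2 * ∑ k ∈ range n, |x k| * ∑ j ∈ range (k + 1), |x j| := by
  induction n with
  | zero => simp
  | succ n ih =>
    have hcross : (∑ k ∈ range n, x k) * x n ≤ |x n| * ∑ j ∈ range n, |x j| :=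
      calc (∑ k ∈ range n, x k) * x n ≤ |(∑ k ∈ range n, x k) * x n| := le_abs_self _
        _ ≤ |x n| * ∑ j ∈ range n, |x j| := by
          rw [abs_mul, mul_comm]
          exact mul_le_mul_of_nonneg_left (abs_sum_le_sum_abs _ _) (abs_nonneg _)
    rw [sum_range_succ, sum_range_succ, sum_range_succ (fun j => |x j|) n]
    nlinarith [sq_abs (x n)]

/-- Pairing each term with the earlier ones (instead of using Minkowski's inequality) is what
gives `log ℓ` rather than `log² ℓ` in dimension two. -/
theorem sum_sq_sum_le {α : Type*} [Nonempty α] (S : Finset α) (f : ℕ → α → ℝ) (n : ℕ)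
    (a b : ℕ → ℝ) (ha : ∀ k < n, ∑ z ∈ S, |f k z| ≤ a k) (hb : ∀ k < n, ∀ z, |f k z| ≤ b k) :
    ∑ z ∈ S, (∑ k ∈ range n, f k z) ^ 2 ≤ 2 * ∑ k ∈ range n, b k * ∑ j ∈ range (k + 1), a j :=
  calc ∑ z ∈ S, (∑ k ∈ range n, f k z) ^ 2
      ≤ ∑ z ∈ S, 2 * ∑ k ∈ range n, |f k z| * ∑ j ∈ range (k + 1), |f j z| :=
        sum_le_sum fun z _ => sq_sum_range_le _ n
    _ = 2 * ∑ k ∈ range n, ∑ j ∈ range (k + 1), ∑ z ∈ S, |f k z| * |f j z| := by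
        rw [← mul_sum]
        simp_rw [mul_sum]
        rw [sum_comm]
        exact sum_congr rfl fun k _ => sum_comm
    _ ≤ 2 * ∑ k ∈ range n, b k * ∑ j ∈ range (k + 1), a j := by
        refine mul_le_mul_of_nonneg_left (sum_le_sum fun k hk => ?_) zero_le_two
        rw [mul_sum]
        refine sum_le_sum fun j hj => ?_
        simp only [mem_range] at hk hj
        have hbk : 0 ≤ b k := (abs_nonneg _).trans (hb k hk (Classical.arbitrary α))
        calc ∑ z ∈ S, |f k z| * |f j z| ≤ ∑ z ∈ S, b k * |f j z| :=
              sum_le_sum fun z _ => mul_le_mul_of_nonneg_right (hb k hk z) (abs_nonneg _)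
          _ ≤ b k * a j := by
              rw [← mul_sum]
              exact mul_le_mul_of_nonneg_left (ha j (by omega)) hbk

section

variable {ℓ k : ℕ}

theorem two_pow_clog_lt (hℓ : 1 ≤ ℓ) : 2 ^ Nat.clog 2 ℓ < 2 * ℓ := by
  rcases hℓ.eq_or_lt with rfl | hℓ
  · simp
  · have hlt := Nat.pow_pred_clog_lt_self one_lt_two hℓ
    rw [← Nat.succ_pred_eq_of_pos (Nat.clog_pos one_lt_two hℓ), pow_succ']
    omega

theorem clog_add_one_le_log (hℓ : 2 ≤ ℓ) : (Nat.clog 2 ℓ : ℝ) + 1 ≤ 6 * Real.log ℓ := by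
  have hK : 1 ≤ Nat.clog 2 ℓ := Nat.clog_pos one_lt_two hℓ
  have hlog2 : 1 / 2 < Real.log 2 := by linarith [Real.log_two_gt_d9]
  have hmono : Real.log 2 ≤ Real.log ℓ := Real.log_le_log two_pos (by exact_mod_cast hℓ)
  have hpow : ((Nat.clog 2 ℓ - 1 : ℕ) : ℝ) * Real.log 2 ≤ Real.log ℓ := by
    rw [← Real.log_pow]
    exact Real.log_le_log (by positivity)
      (by exact_mod_cast (Nat.pow_pred_clog_lt_self one_lt_two hℓ).le)
  rw [Nat.cast_sub hK, Nat.cast_one] at hpow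
  nlinarith

theorem inv_le_four_div_two_pow {s : ℕ} (hs : 0 < s) (h : 2 ^ k ≤ 4 * s) :
    (s : ℝ)⁻¹ ≤ 4 / 2 ^ k := by
  rw [inv_eq_one_div, div_le_div_iff₀ (by positivity) (by positivity)]
  exact_mod_cast (by omega : 1 * 2 ^ k ≤ 4 * s)

theorem sum_range_two_pow_succ_le (n : ℕ) :
    ∑ k ∈ range n, (2 : ℝ) ^ (k + 1) ≤ 2 ^ (n + 1) := by
  induction n with
  | zero => simp
  | succ n ih => rw [sum_range_succ, pow_succ _ (n + 1)]; linarith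

noncomputable def scaleDensity (ℓ k : ℕ) : ℤ → ℝ :=
  if k ≤ Nat.clog 2 ℓ then unif (min (2 ^ k) ℓ) else tri ℓ

theorem scaleDensity_zero (hℓ : 1 ≤ ℓ) : scaleDensity ℓ 0 = unif 1 := by
  simp [scaleDensity, hℓ]

theorem scaleDensity_clog_add_one (ℓ : ℕ) : scaleDensity ℓ (Nat.clog 2 ℓ + 1) = tri ℓ := by
  simp [scaleDensity]

section

variable (hℓ : 1 ≤ ℓ)
include hℓ

theorem isProbOn_scaleDensity (k : ℕ) : IsProbOn (scaleDensity ℓ k) (2 * ℓ - 2) := by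
  unfold scaleDensity
  split
  · exact (isProbOn_unif (le_min (Nat.one_le_two_pow) hℓ)).mono (by push_cast; omega)
  · exact isProbOn_tri hℓ

theorem isProbOn_scaleDensity_two_pow (hk : k ≤ Nat.clog 2 ℓ + 1) :
    IsProbOn (scaleDensity ℓ k) (2 ^ k - 1) := by
  unfold scaleDensity
  split
  · exact (isProbOn_unif (le_min (Nat.one_le_two_pow) hℓ)).mono (by push_cast; omega)
  · have hle : (ℓ : ℤ) ≤ 2 ^ Nat.clog 2 ℓ := by exact_mod_cast Nat.le_pow_clog one_lt_two ℓ
    refine (isProbOn_tri hℓ).mono ?_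
    rw [show k = Nat.clog 2 ℓ + 1 by omega, pow_succ]
    omega

theorem scaleDensity_le (hk : k ≤ Nat.clog 2 ℓ + 1) (x : ℤ) :
    scaleDensity ℓ k x ≤ 4 / 2 ^ k := by
  have hlt := two_pow_clog_lt hℓ
  unfold scaleDensity
  split
  · refine (unif_le _ x).trans (inv_le_four_div_two_pow (by positivity) ?_)
    have : 2 ^ k ≤ 2 ^ Nat.clog 2 ℓ := Nat.pow_le_pow_right two_pos (by assumption)
    omega
  · refine (tri_le hℓ x).trans (inv_le_four_div_two_pow hℓ ?_)
    rw [show k = Nat.clog 2 ℓ + 1 by omega, pow_succ]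
    omega

end

end

section

variable {d ℓ k : ℕ}

noncomputable def stepFlow (d ℓ k : ℕ) : (Fin d → ℤ) → Fin d → ℝ :=
  tensorFlow d (scaleDensity ℓ k) (scaleDensity ℓ (k + 1))
    fun x => cdf (scaleDensity ℓ k) x - cdf (scaleDensity ℓ (k + 1)) x

noncomputable def flow (d ℓ : ℕ) (z : Fin d → ℤ) (i : Fin d) : ℝ :=
  ∑ k ∈ range (Nat.clog 2 ℓ + 1), stepFlow d ℓ k z i

noncomputable def scaleSum (d K : ℕ) : ℝ :=
  ∑ k ∈ range (K + 1), (4 / 2 ^ k : ℝ) ^ (d - 1) * 2 ^ k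

section

variable (hℓ : 1 ≤ ℓ)
include hℓ

theorem connects_flow : Connects d (flow d ℓ) (delta0 d) (qconv d ℓ) := by
  have := connects_sum_range (stepFlow d ℓ) (fun k => prodDensity d (scaleDensity ℓ k))
    (Nat.clog 2 ℓ + 1) fun k _ => connects_tensorFlow fun x => by
      rw [sub_sub_sub_comm, (isProbOn_scaleDensity hℓ k).cdf_sub_cdf_sub_one,
        (isProbOn_scaleDensity hℓ (k + 1)).cdf_sub_cdf_sub_one]
  rwa [scaleDensity_zero hℓ, prodDensity_unif_one, scaleDensity_clog_add_one,
    prodDensity_tri] at this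

theorem supportedIn_flow : SupportedIn d (flow d ℓ) (Lam d (2 * ℓ - 1)) := by
  intro z c hz
  obtain ⟨k, -, hk⟩ := exists_ne_zero_of_sum_ne_zero hz
  have hf := isProbOn_scaleDensity hℓ k
  have hg := isProbOn_scaleDensity hℓ (k + 1)
  obtain ⟨hT, hT'⟩ := mem_of_tensorFlow_ne_zero hf.eq_zero_of_notMem hg.eq_zero_of_notMem
    (fun x => hf.cdf_sub_cdf_eq_zero hg) hk
  simp only [mem_Icc] at hT hT'
  have hcoord : ∀ j, 0 ≤ z j ∧ z j ≤ 2 * ℓ - 2 := fun j => by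
    rcases eq_or_ne j c with rfl | hj
    · omega
    · exact hT j hj
  refine ⟨mem_Lam.2 fun j => ?_, mem_Lam.2 fun j => ?_⟩
  · have := hcoord j
    omega
  · have := hcoord j
    rcases eq_or_ne j c with rfl | hj
    · simp only [Pi.add_apply, eZ, if_true]
      omega
    · simp only [Pi.add_apply, eZ, if_neg hj]
      omega

theorem abs_stepFlow_le (hk : k ≤ Nat.clog 2 ℓ) (z : Fin d → ℤ) (c : Fin d) :
    |stepFlow d ℓ k z c| ≤ (4 / 2 ^ k) ^ (d - 1) := by
  have hf := isProbOn_scaleDensity hℓ k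
  have hg := isProbOn_scaleDensity hℓ (k + 1)
  refine abs_tensorFlow_le (fun x => ?_) (fun x => ?_) (hf.abs_cdf_sub_cdf_le_one hg) z c
  · rw [abs_of_nonneg (hf.nonneg x)]
    exact scaleDensity_le hℓ (by omega) x
  · rw [abs_of_nonneg (hg.nonneg x)]
    calc scaleDensity ℓ (k + 1) x ≤ 4 / 2 ^ (k + 1) := scaleDensity_le hℓ (by omega) x
      _ ≤ 4 / 2 ^ k := by gcongr <;> norm_num

theorem sum_abs_stepFlow_le (hk : k ≤ Nat.clog 2 ℓ) (c : Fin d) :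
    ∑ z ∈ Lam d (2 * ℓ - 1), |stepFlow d ℓ k z c| ≤ 2 ^ (k + 1) := by
  have hf := isProbOn_scaleDensity_two_pow hℓ (k := k) (by omega)
  have hg := isProbOn_scaleDensity_two_pow hℓ (k := k + 1) (by omega)
  refine sum_abs_tensorFlow_le _ (hf.sum_abs_le_one _) (hg.sum_abs_le_one _) ?_ c
  have h2 : ((2 : ℤ) ^ k - 1) ≤ 2 ^ (k + 1) - 1 := by
    linarith [pow_le_pow_right₀ (one_le_two : (1 : ℤ) ≤ 2) (by omega : k ≤ k + 1)]
  have := (hf.mono h2).sum_abs_cdf_sub_cdf_le hg (Icc 0 (((2 * ℓ - 1 : ℕ) : ℤ) - 1))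
  push_cast at this
  linarith

theorem sum_abs_flow_le :
    ∑ z ∈ Lam d (2 * ℓ - 1), ∑ i, |flow d ℓ z i| ≤ 8 * d * ℓ :=
  calc ∑ z ∈ Lam d (2 * ℓ - 1), ∑ i, |flow d ℓ z i|
      ≤ ∑ z ∈ Lam d (2 * ℓ - 1), ∑ i, ∑ k ∈ range (Nat.clog 2 ℓ + 1), |stepFlow d ℓ k z i| :=
        sum_le_sum fun z _ => sum_le_sum fun i _ => abs_sum_le_sum_abs _ _
    _ = ∑ i : Fin d, ∑ k ∈ range (Nat.clog 2 ℓ + 1),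
          ∑ z ∈ Lam d (2 * ℓ - 1), |stepFlow d ℓ k z i| := by
        rw [sum_comm]
        exact sum_congr rfl fun i _ => sum_comm
    _ ≤ ∑ _i : Fin d, ∑ k ∈ range (Nat.clog 2 ℓ + 1), (2 : ℝ) ^ (k + 1) :=
        sum_le_sum fun i _ => sum_le_sum fun k hk =>
          sum_abs_stepFlow_le hℓ (Nat.lt_succ_iff.1 (mem_range.1 hk)) i
    _ ≤ ∑ _i : Fin d, (2 : ℝ) ^ (Nat.clog 2 ℓ + 2) :=
        sum_le_sum fun i _ => sum_range_two_pow_succ_le _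
    _ ≤ 8 * d * ℓ := by
        have : (2 : ℝ) ^ Nat.clog 2 ℓ ≤ 2 * ℓ := by exact_mod_cast (two_pow_clog_lt hℓ).le
        rw [sum_const, card_univ, Fintype.card_fin, nsmul_eq_mul, pow_add]
        have hd : (0 : ℝ) ≤ d := d.cast_nonneg
        nlinarith

theorem sum_sq_flow_le :
    ∑ z ∈ Lam d (2 * ℓ - 1), ∑ i, flow d ℓ z i ^ 2 ≤ 8 * d * scaleSum d (Nat.clog 2 ℓ) := by
  rw [sum_comm]
  calc ∑ i : Fin d, ∑ z ∈ Lam d (2 * ℓ - 1), flow d ℓ z i ^ 2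
      ≤ ∑ _i : Fin d, 2 * ∑ k ∈ range (Nat.clog 2 ℓ + 1),
          (4 / 2 ^ k : ℝ) ^ (d - 1) * ∑ j ∈ range (k + 1), (2 : ℝ) ^ (j + 1) :=
        sum_le_sum fun i _ => sum_sq_sum_le _ (fun k z => stepFlow d ℓ k z i) _ _ _
          (fun k hk => sum_abs_stepFlow_le hℓ (by omega) i)
          (fun k hk z => abs_stepFlow_le hℓ (by omega) z i)
    _ ≤ ∑ _i : Fin d, 2 * ∑ k ∈ range (Nat.clog 2 ℓ + 1),
          (4 / 2 ^ k : ℝ) ^ (d - 1) * 2 ^ (k + 2) := by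
        gcongr with i _ k
        exact sum_range_two_pow_succ_le _
    _ = 8 * d * scaleSum d (Nat.clog 2 ℓ) := by
        simp only [sum_const, card_univ, Fintype.card_fin, nsmul_eq_mul, scaleSum, mul_sum]
        exact sum_congr rfl fun k _ => by ring

end

end

theorem scaleSum_one (K : ℕ) : scaleSum 1 K ≤ 2 ^ (K + 1) := by
  simp only [scaleSum, Nat.sub_self, pow_zero, one_mul]
  exact_mod_cast (Nat.geomSum_lt le_rfl fun k hk => mem_range.1 hk).le

theorem scaleSum_two (K : ℕ) : scaleSum 2 K = 4 * (K + 1) := by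
  rw [scaleSum, sum_congr rfl fun k _ => show (4 / 2 ^ k : ℝ) ^ (2 - 1) * 2 ^ k = 4 by
    rw [Nat.add_one_sub_one, pow_one, div_mul_cancel₀ _ (by positivity)]]
  simp [mul_comm]

theorem scaleSum_le_of_three_le {d : ℕ} (hd : 3 ≤ d) (K : ℕ) :
    scaleSum d K ≤ 2 * 4 ^ (d - 1) := by
  obtain ⟨m, hm⟩ : ∃ m, d - 1 = m + 2 := ⟨d - 3, by omega⟩
  have hterm : ∀ k : ℕ, (4 / 2 ^ k : ℝ) ^ (d - 1) * 2 ^ k ≤ 4 ^ (d - 1) * (1 / 2) ^ k := by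
    intro k
    have hy : (1 / 2 : ℝ) ^ k * 2 ^ k = 1 := by rw [← mul_pow]; norm_num
    have hy1 : (1 / 2 : ℝ) ^ k ≤ 1 := pow_le_one₀ (by norm_num) (by norm_num)
    calc (4 / 2 ^ k : ℝ) ^ (d - 1) * 2 ^ k
        = 4 ^ (d - 1) * ((1 / 2) ^ k) ^ (m + 1) * ((1 / 2) ^ k * 2 ^ k) := by
          rw [hm, div_eq_mul_one_div 4, ← one_div_pow]
          ring
      _ ≤ 4 ^ (d - 1) * (1 / 2) ^ k := by
          rw [hy, mul_one]
          exact mul_le_mul_of_nonneg_left (pow_le_of_le_one (by positivity) hy1 m.succ_ne_zero)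
            (by positivity)
  calc scaleSum d K ≤ ∑ k ∈ range (K + 1), 4 ^ (d - 1) * (1 / 2 : ℝ) ^ k :=
        sum_le_sum fun k _ => hterm k
    _ ≤ 4 ^ (d - 1) * 2 := by rw [← mul_sum]; gcongr; exact sum_geometric_two_le _
    _ = 2 * 4 ^ (d - 1) := mul_comm _ _

theorem exists_scaleSum_le_mul_gd {d : ℕ} (hd : 1 ≤ d) :
    ∃ C : ℝ, ∀ ℓ, 2 ≤ ℓ → scaleSum d (Nat.clog 2 ℓ) ≤ C * gd d ℓ := by
  rcases (by omega : d = 1 ∨ d = 2 ∨ 3 ≤ d) with rfl | rfl | hd3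
  · refine ⟨4, fun ℓ hℓ => ?_⟩
    have : (2 : ℝ) ^ Nat.clog 2 ℓ ≤ 2 * ℓ := by
      exact_mod_cast (two_pow_clog_lt (by omega)).le
    rw [gd, if_pos rfl]
    calc scaleSum 1 (Nat.clog 2 ℓ) ≤ 2 ^ (Nat.clog 2 ℓ + 1) := scaleSum_one _
      _ ≤ 4 * ℓ := by rw [pow_succ]; linarith
  · refine ⟨24, fun ℓ hℓ => ?_⟩
    rw [gd, if_neg (by norm_num), if_pos rfl, scaleSum_two]
    linarith [clog_add_one_le_log hℓ]
  · refine ⟨2 * 4 ^ (d - 1), fun ℓ _ => ?_⟩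
    rw [gd, if_neg (by omega), if_neg (by omega), mul_one]
    exact scaleSum_le_of_three_le hd3 _

end LatticeFlow

open LatticeFlow

/-- Flow lemma: there is `C = C(d)` such that for every `ℓ ∈ ℕ` there is a flow `φ_ℓ`
connecting the point mass at `0` to `q_ℓ`, supported in `Λ_{2ℓ-1}`, with
`Σ_{z,b} φ_ℓ(z;b)² ≤ C g_d(ℓ)` and `Σ_{z,b} |φ_ℓ(z;b)| ≤ C ℓ`. -/
theorem flow_lemma (d : ℕ) (hd : 1 ≤ d) :
    ∃ C : ℝ, 0 < C ∧ ∀ ℓ : ℕ, 1 ≤ ℓ →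
      ∃ φ : (Fin d → ℤ) → Fin d → ℝ,
        SupportedIn d φ (Lam d (2 * ℓ - 1)) ∧
        Connects d φ (delta0 d) (qconv d ℓ) ∧
        (∑ᶠ z : Fin d → ℤ, ∑ i : Fin d, (φ z i) ^ 2) ≤ C * gd d ℓ ∧
        (∑ᶠ z : Fin d → ℤ, ∑ i : Fin d, |φ z i|) ≤ C * ℓ := by
  obtain ⟨C₀, hC₀⟩ := exists_scaleSum_le_mul_gd hd
  have hgd := gd_nonneg d
  refine ⟨8 * d * max C₀ 1, by positivity, fun ℓ hℓ => ?_⟩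
  rcases hℓ.eq_or_lt with rfl | hℓ₂
  -- `q₁ = δ₀`; the zero flow is needed here because `g₂(1) = log 1 = 0`.
  · refine ⟨0, fun _ _ h => absurd rfl h, fun z => ?_, ?_, ?_⟩
    · simp [← prodDensity_tri, tri_one, prodDensity_unif_one]
    · simpa using mul_nonneg (by positivity) (hgd 1)
    · simp only [Pi.zero_apply, abs_zero, sum_const_zero, finsum_zero]
      positivity
  · have hsupp := supportedIn_flow (d := d) hℓ
    refine ⟨flow d ℓ, hsupp, connects_flow hℓ, ?_, ?_⟩
    · refine (hsupp.finsum_eq_sum (· ^ 2) (zero_pow two_ne_zero)).trans_le ?_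
      calc _ ≤ 8 * d * scaleSum d (Nat.clog 2 ℓ) := sum_sq_flow_le hℓ
        _ ≤ 8 * d * (max C₀ 1 * gd d ℓ) := by
          gcongr
          exact (hC₀ ℓ hℓ₂).trans (mul_le_mul_of_nonneg_right (le_max_left _ _) (hgd ℓ))
        _ = 8 * d * max C₀ 1 * gd d ℓ := by ring
    · refine (hsupp.finsum_eq_sum (|·|) abs_zero).trans_le ?_
      calc _ ≤ (8 * d * 1 * ℓ : ℝ) := by simpa using sum_abs_flow_le hℓ
        _ ≤ 8 * d * max C₀ 1 * ℓ := by gcongr; exact le_max_right C₀ 1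
end

section
/- For every dimension d ≥ 1 there exists a finite constant C = C(d) such that for any integer ℓ ≥ 2 there exists a flow ψ^ℓ in ℤ^d connecting p_ℓ to p_{ℓ−1}, with support contained in Λ_ℓ, such that |ψ^ℓ(x;b)| ≤ C ℓ^{−d} for every x ∈ ℤ^d and every b ∈ B. -/
/-!
In dimension one, the flow from the uniform measure on `{0, …, ℓ-1}` to the uniform measure on
`{0, …, ℓ-2}` is the difference of their distribution functions, which is of size at most `1/ℓ`.
In dimension `d`, `p_ℓ` and `p_{ℓ-1}` are products of one-dimensional measures, and the telescoping
identity `∏ aᵢ - ∏ bᵢ = ∑ₖ (∏_{j<k} aⱼ) (aₖ - bₖ) (∏_{j>k} bⱼ)` shows that the flow which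
moves the `k`-th coordinate by the one-dimensional flow, weighted by `p_ℓ` in the earlier and by
`p_{ℓ-1}` in the later coordinates, connects them. Each of its values is a product of `d` factors
of size `O(1/ℓ)`.
-/

open Finset Real

theorem Finset.prod_sub_prod_ordered {ι R : Type*} [CommRing R] [LinearOrder ι] (s : Finset ι)
    (f g : ι → R) :
    ∏ i ∈ s, f i - ∏ i ∈ s, g i =
      ∑ i ∈ s, (f i - g i) * (∏ j ∈ s with j < i, f j) * ∏ j ∈ s with i < j, g j := by
  have h := prod_add_ordered s g (f - g)
  simp only [Pi.sub_apply, add_sub_cancel] at h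
  rw [h, add_sub_cancel_left]

theorem Fintype.prod_eq_prod_lt_mul_mul_prod_gt {ι M : Type*} [CommMonoid M] [Fintype ι]
    [LinearOrder ι] (f : ι → M) (k : ι) :
    ∏ j, f j = (∏ j with j < k, f j) * f k * ∏ j with k < j, f j := by
  have hk : k ∉ ({j | k < j} : Finset ι) := by simp
  rw [mul_assoc, ← prod_cons hk, ← prod_filter_mul_prod_filter_not univ (· < k)]
  congr 2
  ext j
  simp [le_iff_eq_or_lt, eq_comm]

theorem inv_le_two_div_of_le_two_mul {ℓ m : ℕ} (hℓ : 0 < ℓ) (h : ℓ ≤ 2 * m) :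
    (m : ℝ)⁻¹ ≤ 2 / ℓ := by
  have hm : (0 : ℝ) < m := by exact_mod_cast (by omega : 0 < m)
  rw [inv_eq_one_div, div_le_div_iff₀ hm (by exact_mod_cast hℓ)]
  exact_mod_cast (by omega : 1 * ℓ ≤ 2 * m)

noncomputable def unif1 (ℓ : ℕ) (z : ℤ) : ℝ :=
  if z ∈ Icc 0 ((ℓ : ℤ) - 1) then (ℓ : ℝ)⁻¹ else 0

theorem punif_eq_prod (d ℓ : ℕ) : punif d ℓ = fun z => ∏ i, unif1 ℓ (z i) := by
  ext z
  simp only [punif, unif1, Lam, Fintype.mem_piFinset, prod_ite_zero, prod_const, card_univ,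
    Fintype.card_fin, mem_univ, forall_const, inv_pow]

theorem abs_unif1_le (ℓ : ℕ) (z : ℤ) : |unif1 ℓ z| ≤ (ℓ : ℝ)⁻¹ := by
  unfold unif1; split_ifs <;> simp

theorem mem_of_unif1_ne_zero {ℓ : ℕ} {z : ℤ} (h : unif1 ℓ z ≠ 0) : z ∈ Icc 0 ((ℓ : ℤ) - 1) := by
  by_contra hz; exact h (if_neg hz)

-- `flow1 ℓ z` is `F_ℓ(z) - F_{ℓ-1}(z)`, with `F_m` the distribution function of `unif1 m`.
noncomputable def flow1 (ℓ : ℕ) (z : ℤ) : ℝ :=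
  if z ∈ Icc 0 ((ℓ : ℤ) - 2) then -((z : ℝ) + 1) / (ℓ * (ℓ - 1)) else 0

theorem unif1_sub_unif1_pred {ℓ : ℕ} (hℓ : 2 ≤ ℓ) (z : ℤ) :
    unif1 ℓ z - unif1 (ℓ - 1) z = flow1 ℓ z - flow1 ℓ (z - 1) := by
  obtain ⟨m, rfl⟩ : ∃ m, ℓ = m + 2 := ⟨ℓ - 2, by omega⟩
  have hm1 : (m : ℝ) + 1 ≠ 0 := by positivity
  have hm2 : (m : ℝ) + 2 ≠ 0 := by positivity
  simp only [unif1, flow1, mem_Icc]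
  push_cast
  rw [show (m : ℝ) + 2 - 1 = m + 1 by ring]
  rcases (by omega : z ≠ 0 ∧ z ≠ m + 1 ∨ z = 0 ∨ z = m + 1) with hz | rfl | rfl <;>
    split_ifs <;> first | (exfalso; omega) | (push_cast; field_simp; ring1) | simp

theorem abs_flow1_le (ℓ : ℕ) (z : ℤ) : |flow1 ℓ z| ≤ (ℓ : ℝ)⁻¹ := by
  unfold flow1
  split_ifs with hz
  · rw [mem_Icc] at hz
    have hℓ : (2 : ℝ) ≤ ℓ := by exact_mod_cast (by omega : (2 : ℤ) ≤ ℓ)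
    have hz₀ : (0 : ℝ) ≤ z := by exact_mod_cast hz.1
    have hz₁ : (z : ℝ) + 1 ≤ ℓ - 1 := by exact_mod_cast (by omega : z + 1 ≤ (ℓ : ℤ) - 1)
    rw [abs_div, abs_neg, abs_of_nonneg (by linarith), abs_of_pos (by nlinarith)]
    calc ((z : ℝ) + 1) / (ℓ * (ℓ - 1)) ≤ (ℓ - 1) / (ℓ * (ℓ - 1)) :=
          div_le_div_of_nonneg_right hz₁ (by nlinarith)
      _ = (ℓ : ℝ)⁻¹ := by rw [mul_comm, ← div_div, div_self (by linarith), one_div]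
  · simp

theorem mem_of_flow1_ne_zero {ℓ : ℕ} {z : ℤ} (h : flow1 ℓ z ≠ 0) : z ∈ Icc 0 ((ℓ : ℤ) - 2) := by
  by_contra hz; exact h (if_neg hz)

section TensorFlow

variable {d : ℕ}

noncomputable def tensorFlow (p q φ : ℤ → ℝ) (z : Fin d → ℤ) (k : Fin d) : ℝ :=
  (∏ j with j < k, p (z j)) * φ (z k) * ∏ j with k < j, q (z j)

theorem sub_eZ_apply_of_ne (z : Fin d → ℤ) {j k : Fin d} (h : j ≠ k) : (z - eZ d k) j = z j := by
  simp [eZ, h]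

theorem connects_tensorFlow {p q φ : ℤ → ℝ} (h : ∀ z, p z - q z = φ z - φ (z - 1)) :
    Connects d (tensorFlow p q φ) (fun z => ∏ i, p (z i)) (fun z => ∏ i, q (z i)) := by
  intro z
  rw [prod_sub_prod_ordered]
  refine sum_congr rfl fun k _ => ?_
  have hk : (z - eZ d k) k = z k - 1 := by simp [eZ]
  have hp : ∏ j with j < k, p ((z - eZ d k) j) = ∏ j with j < k, p (z j) :=
    prod_congr rfl fun j hj => by rw [sub_eZ_apply_of_ne z (mem_filter.1 hj).2.ne]
  have hq : ∏ j with k < j, q ((z - eZ d k) j) = ∏ j with k < j, q (z j) :=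
    prod_congr rfl fun j hj => by rw [sub_eZ_apply_of_ne z (mem_filter.1 hj).2.ne']
  rw [tensorFlow, tensorFlow, hk, hp, hq, h]
  ring

theorem tensorFlow_supportedIn {p q φ : ℤ → ℝ} {S : Finset ℤ} (hp : ∀ z, p z ≠ 0 → z ∈ S)
    (hq : ∀ z, q z ≠ 0 → z ∈ S) (hφ : ∀ z, φ z ≠ 0 → z ∈ S ∧ z + 1 ∈ S) :
    SupportedIn d (tensorFlow p q φ) (Fintype.piFinset fun _ => S) := by
  intro z k hz
  simp only [tensorFlow, mul_ne_zero_iff, prod_ne_zero_iff, mem_filter, mem_univ,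
    true_and] at hz
  obtain ⟨⟨hlt, hφk⟩, hgt⟩ := hz
  have hmem : ∀ j, z j ∈ S := fun j => by
    rcases lt_trichotomy j k with hjk | rfl | hjk
    exacts [hp _ (hlt j hjk), (hφ _ hφk).1, hq _ (hgt j hjk)]
  refine ⟨Fintype.mem_piFinset.2 hmem, Fintype.mem_piFinset.2 fun j => ?_⟩
  by_cases hjk : j = k
  · subst hjk; simpa [eZ] using (hφ _ hφk).2
  · simpa [eZ, hjk] using hmem j

theorem abs_tensorFlow_le {p q φ : ℤ → ℝ} {a : ℝ} (hp : ∀ z, |p z| ≤ a) (hq : ∀ z, |q z| ≤ a)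
    (hφ : ∀ z, |φ z| ≤ a) (z : Fin d → ℤ) (k : Fin d) : |tensorFlow p q φ z k| ≤ a ^ d := by
  have ha : 0 ≤ a := (abs_nonneg _).trans (hp 0)
  calc |tensorFlow p q φ z k|
      = (∏ j with j < k, |p (z j)|) * |φ (z k)| * ∏ j with k < j, |q (z j)| := by
        simp only [tensorFlow, abs_mul, abs_prod]
    _ ≤ (∏ j with j < k, a) * a * ∏ j with k < j, a := by
        gcongr with j _ j _
        exacts [hp _, hφ _, hq _]
    _ = a ^ d := by
        rw [← Fintype.prod_eq_prod_lt_mul_mul_prod_gt, prod_const, card_univ, Fintype.card_fin]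

end TensorFlow

theorem flow_step_lemma_general (d : ℕ) :
    ∃ C : ℝ, 0 < C ∧ ∀ ℓ : ℕ, 2 ≤ ℓ →
      ∃ ψ : (Fin d → ℤ) → Fin d → ℝ,
        SupportedIn d ψ (Lam d ℓ) ∧
        Connects d ψ (punif d ℓ) (punif d (ℓ - 1)) ∧
        ∀ (x : Fin d → ℤ) (i : Fin d), |ψ x i| ≤ C / (ℓ : ℝ) ^ d := by
  refine ⟨2 ^ d, by positivity, fun ℓ hℓ =>
    ⟨tensorFlow (unif1 ℓ) (unif1 (ℓ - 1)) (flow1 ℓ), ?_, ?_, ?_⟩⟩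
  · refine tensorFlow_supportedIn (fun z h => mem_of_unif1_ne_zero h) (fun z h => ?_) fun z h => ?_
    · have := mem_Icc.1 (mem_of_unif1_ne_zero h)
      exact mem_Icc.2 (by omega)
    · have := mem_Icc.1 (mem_of_flow1_ne_zero h)
      exact ⟨mem_Icc.2 (by omega), mem_Icc.2 (by omega)⟩
  · rw [punif_eq_prod, punif_eq_prod]
    exact connects_tensorFlow (unif1_sub_unif1_pred hℓ)
  · have hinv (m : ℕ) (hm : ℓ ≤ 2 * m) : (m : ℝ)⁻¹ ≤ 2 / ℓ :=
      inv_le_two_div_of_le_two_mul (by omega) hm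
    intro x k
    calc |tensorFlow (unif1 ℓ) (unif1 (ℓ - 1)) (flow1 ℓ) x k| ≤ (2 / ℓ : ℝ) ^ d :=
          abs_tensorFlow_le (fun z => (abs_unif1_le ℓ z).trans (hinv ℓ (by omega)))
            (fun z => (abs_unif1_le (ℓ - 1) z).trans (hinv (ℓ - 1) (by omega)))
            (fun z => (abs_flow1_le ℓ z).trans (hinv ℓ (by omega))) x k
      _ = 2 ^ d / (ℓ : ℝ) ^ d := div_pow _ _ _

/-- Lemma I.1: there is `C = C(d)` such that for every `ℓ ≥ 2` there is a flow `ψ^ℓ`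
connecting `p_ℓ` to `p_{ℓ-1}`, supported in `Λ_ℓ`, with `|ψ^ℓ(x;b)| ≤ C ℓ^{-d}`. -/
theorem flow_step_lemma (d : ℕ) (hd : 1 ≤ d) :
    ∃ C : ℝ, 0 < C ∧ ∀ ℓ : ℕ, 2 ≤ ℓ →
      ∃ ψ : (Fin d → ℤ) → Fin d → ℝ,
        SupportedIn d ψ (Lam d ℓ) ∧
        Connects d ψ (punif d ℓ) (punif d (ℓ - 1)) ∧
        ∀ (x : Fin d → ℤ) (i : Fin d), |ψ x i| ≤ C / (ℓ : ℝ) ^ d :=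
  flow_step_lemma_general d
end

section
/- Let x, y ∈ 𝕋_n^d, let f be a density with respect to μ, and let h : Ω_n → ℝ satisfy ∇_{x,y} h ≡ 0. Then ∫ h (ω_y − ω_x) f dμ = ∫ h s_{x,y} ∇_{x,y} f dμ − (u_y − u_x) ∫ h ω_x ω_y f dμ, where s_{x,y}(η) := η_x(1−η_y)/(u_x(1−u_y)). -/
open Finset Real

/-- The discrete torus `𝕋_n^d = (ℤ/nℤ)^d`. -/
abbrev Torus (n d : ℕ) := Fin d → ZMod n

/-- The configuration space `Ω_n = {0,1}^(𝕋_n^d)`. -/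
abbrev Config (n d : ℕ) := Torus n d → Bool

/-- Occupation variable `η_x ∈ {0,1} ⊆ ℝ`. -/
noncomputable def occ {n d : ℕ} (η : Config n d) (x : Torus n d) : ℝ := if η x then 1 else 0

/-- The weight of the product Bernoulli measure `μ = ⊗_x Bern(u_x)`. -/
noncomputable def bern {n d : ℕ} [NeZero n] (u : Torus n d → ℝ) (η : Config n d) : ℝ :=
  ∏ x : Torus n d, if η x then u x else 1 - u x

/-- `ω_x = (η_x - u_x)/(u_x(1-u_x))`. -/
noncomputable def om {n d : ℕ} (u : Torus n d → ℝ) (x : Torus n d) (η : Config n d) : ℝ :=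
  (occ η x - u x) / (u x * (1 - u x))

/-- The configuration `η^{x,y}` obtained from `η` by exchanging the values at `x` and `y`. -/
def swapC {n d : ℕ} (x y : Torus n d) (η : Config n d) : Config n d :=
  fun z => if z = x then η y else if z = y then η x else η z

/-- `s_{x,y}(η) = η_x(1-η_y)/(u_x(1-u_y))`. -/
noncomputable def sxy {n d : ℕ} (u : Torus n d → ℝ) (x y : Torus n d) (η : Config n d) : ℝ :=
  occ η x * (1 - occ η y) / (u x * (1 - u y))

private lemma swapC_invol {n d : ℕ} (x y : Torus n d) :
    Function.Involutive (swapC x y) := by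
  intro η
  funext z
  simp only [swapC]
  split_ifs <;> simp_all

private lemma boolkey (ux uy R : ℝ) (hx0 : ux ≠ 0) (hx1 : 1 - ux ≠ 0)
    (hy0 : uy ≠ 0) (hy1 : 1 - uy ≠ 0) (a b : Bool) :
    (((if b then (1:ℝ) else 0) - uy) / (uy * (1 - uy))
        - ((if a then (1:ℝ) else 0) - ux) / (ux * (1 - ux)))
      * ((if a then ux else 1 - ux) * (if b then uy else 1 - uy) * R)
    = ((if b then (1:ℝ) else 0) * (1 - (if a then (1:ℝ) else 0)) / (ux * (1 - uy)))
        * ((if b then ux else 1 - ux) * (if a then uy else 1 - uy) * R)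
      - ((if a then (1:ℝ) else 0) * (1 - (if b then (1:ℝ) else 0)) / (ux * (1 - uy)))
        * ((if a then ux else 1 - ux) * (if b then uy else 1 - uy) * R)
      - (uy - ux) * ((((if a then (1:ℝ) else 0) - ux) / (ux * (1 - ux)))
          * (((if b then (1:ℝ) else 0) - uy) / (uy * (1 - uy)))
          * ((if a then ux else 1 - ux) * (if b then uy else 1 - uy) * R)) := by
  cases a <;> cases b <;>
    (norm_num; field_simp; ring)

/-- Integration by parts: if `∇_{x,y} h ≡ 0` then
`∫ h(ω_y - ω_x) f dμ = ∫ h s_{x,y} ∇_{x,y} f dμ - (u_y - u_x) ∫ h ω_x ω_y f dμ`. -/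
theorem integration_by_parts (n d : ℕ) [NeZero n]
    (u : Torus n d → ℝ) (hu : ∀ x, 0 < u x ∧ u x < 1)
    (x y : Torus n d)
    (f : Config n d → ℝ) (hf : ∀ η, 0 ≤ f η) (hf1 : ∑ η : Config n d, f η * bern u η = 1)
    (h : Config n d → ℝ) (hh : ∀ η, h (swapC x y η) - h η = 0) :
    ∑ η : Config n d, h η * (om u y η - om u x η) * f η * bern u η
      = (∑ η : Config n d, h η * sxy u x y η * (f (swapC x y η) - f η) * bern u η)
        - (u y - u x) * ∑ η : Config n d, h η * om u x η * om u y η * f η * bern u η := by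
  by_cases hxy : x = y
  · subst hxy
    have hswap : ∀ η : Config n d, swapC x x η = η := fun η => by
      funext z; simp only [swapC]; split <;> simp_all
    simp [hswap, sub_self]
  · -- notation
    have hT := swapC_invol x y
    have hTx : ∀ η : Config n d, swapC x y η x = η y := fun η => by simp [swapC]
    have hTy : ∀ η : Config n d, swapC x y η y = η x := fun η => by
      simp [swapC, Ne.symm hxy]
    have hh' : ∀ η, h (swapC x y η) = h η := fun η => by
      have := hh η; linarith
    -- bern decomposition
    set R : Config n d → ℝ :=
      fun η => ∏ z ∈ ((Finset.univ.erase x).erase y), (if η z then u z else 1 - u z) with hR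
    have hbern : ∀ η : Config n d,
        bern u η = (if η x then u x else 1 - u x) * ((if η y then u y else 1 - u y) * R η) := by
      intro η
      rw [hR, bern]
      rw [← Finset.mul_prod_erase Finset.univ _ (Finset.mem_univ x)]
      congr 1
      rw [← Finset.mul_prod_erase (Finset.univ.erase x) _
        (Finset.mem_erase.mpr ⟨Ne.symm hxy, Finset.mem_univ y⟩)]
    have hRT : ∀ η : Config n d, R (swapC x y η) = R η := by
      intro η
      apply Finset.prod_congr rfl
      intro z hz
      simp only [Finset.mem_erase] at hz
      simp [swapC, hz.1, hz.2.1]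
    -- reindex the first part of the first RHS sum
    have hreindex :
        ∑ η : Config n d, h η * sxy u x y η * f (swapC x y η) * bern u η
          = ∑ η : Config n d, h η * sxy u x y (swapC x y η) * f η * bern u (swapC x y η) := by
      rw [← Equiv.sum_comp hT.toPerm
        (fun η => h η * sxy u x y η * f (swapC x y η) * bern u η)]
      apply Finset.sum_congr rfl
      intro η _
      simp only [Function.Involutive.coe_toPerm]
      rw [hT η, hh']
    have hsplit :
        ∑ η : Config n d, h η * sxy u x y η * (f (swapC x y η) - f η) * bern u η
          = ∑ η : Config n d, (h η * sxy u x y (swapC x y η) * f η * bern u (swapC x y η)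
              - h η * sxy u x y η * f η * bern u η) := by
      rw [Finset.sum_sub_distrib, ← hreindex, ← Finset.sum_sub_distrib]
      apply Finset.sum_congr rfl
      intro η _
      ring
    rw [hsplit, Finset.mul_sum, ← Finset.sum_sub_distrib]
    apply Finset.sum_congr rfl
    intro η _
    -- pointwise identity
    have h0x := (hu x).1.ne'
    have h1x : 1 - u x ≠ 0 := by have := (hu x).2; intro hc; linarith
    have h0y := (hu y).1.ne'
    have h1y : 1 - u y ≠ 0 := by have := (hu y).2; intro hc; linarith
    have key := boolkey (u x) (u y) (R η) h0x h1x h0y h1y (η x) (η y)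
    rw [hbern η, hbern (swapC x y η), hRT η, hTx η, hTy η]
    simp only [om, occ, sxy, hTx, hTy]
    rw [show (if η x then u x else 1 - u x) * ((if η y then u y else 1 - u y) * R η)
      = (if η x then u x else 1 - u x) * (if η y then u y else 1 - u y) * R η by ring,
      show (if η y then u x else 1 - u x) * ((if η x then u y else 1 - u y) * R η)
      = (if η y then u x else 1 - u x) * (if η x then u y else 1 - u y) * R η by ring]
    linear_combination (h η * f η) * key
end

section
/- Let ε₀ > 0 and assume ε₀ ≤ u_x ≤ 1−ε₀ for all x ∈ 𝕋_n^d. Let x, y ∈ 𝕋_n^d, let f be a density with respect to μ and let h : Ω_n → ℝ satisfy ∇_{x,y} h ≡ 0. Then for any δ > 0, ∫ h (ω_y − ω_x) f dμ ≤ δ n² D_{x,y}(√f; μ) + (4/(δ ε₀² n²)) ∫ h² f dμ − (u_y − u_x) ∫ h ω_x ω_y f dμ. -/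
/-!
Pair each configuration `η` with `η' = η^{x,y}`. Since
`ω_y - ω_x + (u_y - u_x) ω_x ω_y = s_{y,x} - s_{x,y}`, a pair with `η_x = η_y` contributes nothing
to the left side. For `η_x = 1, η_y = 0` the detailed balance
`μ(η') u_x (1 - u_y) = μ(η) (1 - u_x) u_y` turns the pair's contribution into `h (f(η') - f(η)) R`.
Factor `f(η') - f(η) = (√f(η') - √f(η)) (√f(η') + √f(η))`; AM-GM with weight `δ n²` and
Cauchy-Schwarz with weights `u_x (1 - u_y)`, `(1 - u_x) u_y` bound it by the pair's share of the
right side, the constant `4 / (δ ε₀² n²)` sufficing because `u (1 - u) ≥ ε₀ / 2`.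
-/

open Finset Real

variable {n d : ℕ}

lemma Finset.sum_le_sum_of_add_comp_involutive_le {α : Type*} [Fintype α] {σ : α → α}
    (hσ : Function.Involutive σ) {g G : α → ℝ} (hgG : ∀ a, g a + g (σ a) ≤ G a + G (σ a)) :
    ∑ a, g a ≤ ∑ a, G a := by
  have h := Finset.sum_le_sum fun a (_ : a ∈ univ) => hgG a
  rw [sum_add_distrib, sum_add_distrib, hσ.bijective.sum_comp g, hσ.bijective.sum_comp G] at h
  linarith

lemma mul_sq_sub_sq_le {k s s' c c' l C : ℝ} (hc : 0 < c) (hc' : 0 < c') (hl : 0 < l)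
    (hC : 0 ≤ C) (hlC : 1 ≤ 4 * l * C * (c * c')) :
    k * (s' ^ 2 - s ^ 2) ≤ l * (s' - s) ^ 2 * (c + c') + C * k ^ 2 * (s ^ 2 * c + s' ^ 2 * c') := by
  set L := l * (c + c')
  have hL : 0 < L := by positivity
  have cauchy_schwarz : (s + s') ^ 2 * (c * c') ≤ (c + c') * (s ^ 2 * c + s' ^ 2 * c') := by
    nlinarith [sq_nonneg (s * c - s' * c')]
  have amgm : 4 * L * (k * (s' ^ 2 - s ^ 2)) ≤ 4 * L ^ 2 * (s' - s) ^ 2 + k ^ 2 * (s + s') ^ 2 := by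
    nlinarith [sq_nonneg (2 * L * (s' - s) - k * (s + s'))]
  have weighted : k ^ 2 * (s + s') ^ 2 ≤ 4 * L * (C * k ^ 2 * (s ^ 2 * c + s' ^ 2 * c')) :=
    calc k ^ 2 * (s + s') ^ 2 ≤ 4 * l * C * (c * c') * (k ^ 2 * (s + s') ^ 2) :=
          le_mul_of_one_le_left (by positivity) hlC
      _ = 4 * l * C * (k ^ 2 * ((s + s') ^ 2 * (c * c'))) := by ring
      _ ≤ 4 * l * C * (k ^ 2 * ((c + c') * (s ^ 2 * c + s' ^ 2 * c'))) := by gcongr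
      _ = 4 * L * (C * k ^ 2 * (s ^ 2 * c + s' ^ 2 * c')) := by ring
  nlinarith

lemma swapC_involutive (x y : Torus n d) : Function.Involutive (swapC x y) := by
  intro η; funext z; simp only [swapC]; split_ifs <;> simp_all

lemma swapC_eq_self {x y : Torus n d} {η : Config n d} (hη : η x = η y) : swapC x y η = η := by
  funext z; simp only [swapC]; split_ifs <;> simp_all

section Bernoulli

variable [NeZero n] {u : Torus n d → ℝ}

lemma bern_nonneg (hu : ∀ z, 0 ≤ u z ∧ u z ≤ 1) (η : Config n d) : 0 ≤ bern u η :=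
  prod_nonneg fun z _ => by split_ifs <;> linarith [hu z]

lemma bern_eq_mul_mul_prod {x y : Torus n d} (hxy : x ≠ y) (η : Config n d) :
    bern u η = (if η x then u x else 1 - u x) * ((if η y then u y else 1 - u y) *
      ∏ z ∈ (univ.erase x).erase y, if η z then u z else 1 - u z) := by
  rw [bern, ← mul_prod_erase _ _ (mem_univ x),
    ← mul_prod_erase _ _ (mem_erase.mpr ⟨hxy.symm, mem_univ y⟩)]

lemma bern_swapC_mul {x y : Torus n d} {η : Config n d} (hx : η x = true) (hy : η y = false) :
    bern u (swapC x y η) * (u x * (1 - u y)) = bern u η * ((1 - u x) * u y) := by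
  have hxy : x ≠ y := by rintro rfl; simp_all
  have hrest : ∏ z ∈ (univ.erase x).erase y, (if swapC x y η z then u z else 1 - u z)
      = ∏ z ∈ (univ.erase x).erase y, if η z then u z else 1 - u z :=
    prod_congr rfl fun z hz => by
      obtain ⟨hzy, hzx⟩ : z ≠ y ∧ z ≠ x := by simpa using hz
      simp [swapC, hzx, hzy]
  rw [bern_eq_mul_mul_prod hxy, bern_eq_mul_mul_prod hxy (η := η), hrest]
  simp [swapC, hxy.symm, hx, hy]
  ring

end Bernoulli

lemma sxy_eq_zero {u : Torus n d → ℝ} {x y : Torus n d} {η : Config n d} (hη : η x = η y) :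
    sxy u x y η = 0 := by
  simp [sxy, occ, hη]

lemma om_sub_om_add_mul_om {u : Torus n d → ℝ} {x y : Torus n d}
    (hx : 0 < u x ∧ u x < 1) (hy : 0 < u y ∧ u y < 1) (η : Config n d) :
    om u y η - om u x η + (u y - u x) * (om u x η * om u y η) = sxy u y x η - sxy u x y η := by
  have : u x ≠ 0 := hx.1.ne'
  have : 1 - u x ≠ 0 := by linarith
  have : u y ≠ 0 := hy.1.ne'
  have : 1 - u y ≠ 0 := by linarith
  simp only [om, sxy]
  field_simp
  ring

lemma half_le_mul_one_sub {ε₀ t : ℝ} (hε₀ : 0 ≤ ε₀) (h₀ : ε₀ ≤ t) (h₁ : t ≤ 1 - ε₀) :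
    ε₀ / 2 ≤ t * (1 - t) := by
  nlinarith [mul_nonneg (sub_nonneg.mpr h₀) (sub_nonneg.mpr h₁), mul_nonneg hε₀ (by linarith : 0 ≤ 1 - 2 * ε₀)]

section Pairing

variable [NeZero n] (u : Torus n d → ℝ) (x y : Torus n d) (f h : Config n d → ℝ)

noncomputable def ibpSummand (η : Config n d) : ℝ :=
  h η * (om u y η - om u x η) * f η * bern u η
    + (u y - u x) * (h η * om u x η * om u y η * f η * bern u η)

noncomputable def ibpBound (l C : ℝ) (η : Config n d) : ℝ :=
  l * ((√(f (swapC x y η)) - √(f η)) ^ 2 * bern u η) + C * (h η ^ 2 * f η * bern u η)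

variable {u x y f h}

lemma ibpSummand_eq (hx : 0 < u x ∧ u x < 1) (hy : 0 < u y ∧ u y < 1) (η : Config n d) :
    ibpSummand u x y f h η = h η * (sxy u y x η - sxy u x y η) * f η * bern u η := by
  rw [ibpSummand, ← om_sub_om_add_mul_om hx hy]
  ring

lemma ibpBound_nonneg (hu : ∀ z, 0 ≤ u z ∧ u z ≤ 1) (hf : ∀ η, 0 ≤ f η) {l C : ℝ} (hl : 0 ≤ l)
    (hC : 0 ≤ C) (η : Config n d) : 0 ≤ ibpBound u x y f h l C η := by
  have := bern_nonneg hu η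
  have := hf η
  unfold ibpBound
  positivity

lemma ibpSummand_add_swapC_le_of_true_false (hu : ∀ z, 0 < u z ∧ u z < 1) (hf : ∀ η, 0 ≤ f η)
    (hh : ∀ η, h (swapC x y η) = h η) {l C : ℝ} (hl : 0 < l) (hC : 0 ≤ C)
    (hlC : 1 ≤ 4 * l * C * (u x * (1 - u x) * (u y * (1 - u y))))
    {η : Config n d} (hx : η x = true) (hy : η y = false) :
    ibpSummand u x y f h η + ibpSummand u x y f h (swapC x y η)
      ≤ ibpBound u x y f h l C η + ibpBound u x y f h l C (swapC x y η) := by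
  have hxy : x ≠ y := by rintro rfl; simp_all
  set η' := swapC x y η with hη'
  have hη'x : η' x = false := by simp [hη', swapC, hy]
  have hη'y : η' y = true := by simp [hη', swapC, hxy.symm, hx]
  obtain ⟨hux₀, hux₁⟩ := hu x
  obtain ⟨huy₀, huy₁⟩ := hu y
  have hc : 0 < u x * (1 - u y) := mul_pos hux₀ (by linarith)
  have hc' : 0 < (1 - u x) * u y := mul_pos (by linarith) huy₀
  -- `R` is the product of the Bernoulli weights off `{x, y}`, shared by `η` and `η'`.
  set R := bern u η / (u x * (1 - u y)) with hRdef
  have hR : 0 ≤ R := div_nonneg (bern_nonneg (fun z => ⟨(hu z).1.le, (hu z).2.le⟩) η) hc.le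
  have hμ : bern u η = u x * (1 - u y) * R := by
    rw [hRdef, mul_div_cancel₀ _ hc.ne']
  have hμ' : bern u η' = (1 - u x) * u y * R := by
    rw [hRdef, mul_div_assoc', eq_div_iff hc.ne', bern_swapC_mul hx hy, mul_comm]
  have hsummand : ibpSummand u x y f h η + ibpSummand u x y f h η' = h η * (f η' - f η) * R := by
    rw [ibpSummand_eq (hu x) (hu y), ibpSummand_eq (hu x) (hu y), hh η, hμ, hμ']
    simp only [sxy, occ, hx, hy, hη'x, hη'y, Bool.false_eq_true, if_true, if_false]
    have : 1 - u x ≠ 0 := by linarith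
    have : 1 - u y ≠ 0 := by linarith
    field_simp
    ring
  have hbound : ibpBound u x y f h l C η + ibpBound u x y f h l C η'
      = (l * (√(f η') - √(f η)) ^ 2 * (u x * (1 - u y) + (1 - u x) * u y)
          + C * h η ^ 2 * (f η * (u x * (1 - u y)) + f η' * ((1 - u x) * u y))) * R := by
    rw [ibpBound, ibpBound, swapC_involutive x y η, hh η, hμ, hμ']
    ring
  have young := mul_sq_sub_sq_le (k := h η) (s := √(f η)) (s' := √(f η')) hc hc' hl hC
    (by linarith [show u x * (1 - u y) * ((1 - u x) * u y)
      = u x * (1 - u x) * (u y * (1 - u y)) by ring])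
  rw [sq_sqrt (hf η), sq_sqrt (hf η')] at young
  rw [hsummand, hbound]
  exact mul_le_mul_of_nonneg_right young hR

lemma ibpSummand_add_swapC_le (hu : ∀ z, 0 < u z ∧ u z < 1) (hf : ∀ η, 0 ≤ f η)
    (hh : ∀ η, h (swapC x y η) = h η) {l C : ℝ} (hl : 0 < l) (hC : 0 ≤ C)
    (hlC : 1 ≤ 4 * l * C * (u x * (1 - u x) * (u y * (1 - u y)))) (η : Config n d) :
    ibpSummand u x y f h η + ibpSummand u x y f h (swapC x y η)
      ≤ ibpBound u x y f h l C η + ibpBound u x y f h l C (swapC x y η) := by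
  have diagonal (hη : η x = η y) : ibpSummand u x y f h η + ibpSummand u x y f h (swapC x y η)
      ≤ ibpBound u x y f h l C η + ibpBound u x y f h l C (swapC x y η) := by
    have hu' z : 0 ≤ u z ∧ u z ≤ 1 := ⟨(hu z).1.le, (hu z).2.le⟩
    rw [swapC_eq_self hη, ibpSummand_eq (hu x) (hu y), sxy_eq_zero hη, sxy_eq_zero hη.symm]
    have := ibpBound_nonneg (x := x) (y := y) (h := h) hu' hf hl.le hC η
    linarith
  cases hx : η x <;> cases hy : η y
  · exact diagonal (hx.trans hy.symm)
  · have hxy : x ≠ y := by rintro rfl; simp_all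
    have := ibpSummand_add_swapC_le_of_true_false hu hf hh hl hC hlC
      (η := swapC x y η) (by simp [swapC, hy]) (by simp [swapC, hxy.symm, hx])
    rw [swapC_involutive x y η] at this
    linarith
  · exact ibpSummand_add_swapC_le_of_true_false hu hf hh hl hC hlC hx hy
  · exact diagonal (hx.trans hy.symm)

end Pairing

theorem ibp_combined_general (n d : ℕ) [NeZero n] (ε₀ : ℝ) (hε₀ : 0 < ε₀)
    (u : Torus n d → ℝ) (hu : ∀ x, ε₀ ≤ u x ∧ u x ≤ 1 - ε₀)
    (x y : Torus n d)
    (f : Config n d → ℝ) (hf : ∀ η, 0 ≤ f η)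
    (h : Config n d → ℝ) (hh : ∀ η, h (swapC x y η) - h η = 0)
    (δ : ℝ) (hδ : 0 < δ) :
    ∑ η : Config n d, h η * (om u y η - om u x η) * f η * bern u η
      ≤ δ * (n : ℝ) ^ 2 * (∑ η : Config n d,
              (Real.sqrt (f (swapC x y η)) - Real.sqrt (f η)) ^ 2 * bern u η)
        + (4 / (δ * ε₀ ^ 2 * (n : ℝ) ^ 2)) * (∑ η : Config n d, (h η) ^ 2 * f η * bern u η)
        - (u y - u x) * ∑ η : Config n d, h η * om u x η * om u y η * f η * bern u η := by
  have hn : (n : ℝ) ≠ 0 := Nat.cast_ne_zero.mpr (NeZero.ne n)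
  have hu' z : 0 < u z ∧ u z < 1 := ⟨by linarith [hu z], by linarith [hu z]⟩
  have hvar z : ε₀ / 2 ≤ u z * (1 - u z) := half_le_mul_one_sub hε₀.le (hu z).1 (hu z).2
  have hlC : 1 ≤ 4 * (δ * (n : ℝ) ^ 2) * (4 / (δ * ε₀ ^ 2 * (n : ℝ) ^ 2))
      * (u x * (1 - u x) * (u y * (1 - u y))) := by
    have hconst : 4 * (δ * (n : ℝ) ^ 2) * (4 / (δ * ε₀ ^ 2 * (n : ℝ) ^ 2)) = 16 / ε₀ ^ 2 := by
      field_simp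
      ring
    rw [hconst, div_mul_eq_mul_div, le_div_iff₀ (by positivity)]
    nlinarith [mul_le_mul (hvar x) (hvar y) (by positivity) ((hvar x).trans' (by positivity))]
  have hsum := Finset.sum_le_sum_of_add_comp_involutive_le (swapC_involutive x y)
    (ibpSummand_add_swapC_le hu' hf (fun η => sub_eq_zero.mp (hh η)) (by positivity)
      (by positivity) hlC)
  simp only [ibpSummand, ibpBound] at hsum
  rw [sum_add_distrib, sum_add_distrib, ← mul_sum, ← mul_sum, ← mul_sum] at hsum
  linarith

/-- Lemma G.3: if `ε₀ ≤ u ≤ 1-ε₀` and `∇_{x,y} h ≡ 0` then for any `δ > 0`,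
`∫ h(ω_y-ω_x) f dμ ≤ δ n² D_{x,y}(√f;μ) + (4/(δ ε₀² n²)) ∫ h² f dμ
  - (u_y-u_x) ∫ h ω_x ω_y f dμ`. -/
theorem ibp_combined (n d : ℕ) [NeZero n] (ε₀ : ℝ) (hε₀ : 0 < ε₀)
    (u : Torus n d → ℝ) (hu : ∀ x, ε₀ ≤ u x ∧ u x ≤ 1 - ε₀)
    (x y : Torus n d)
    (f : Config n d → ℝ) (hf : ∀ η, 0 ≤ f η) (hf1 : ∑ η : Config n d, f η * bern u η = 1)
    (h : Config n d → ℝ) (hh : ∀ η, h (swapC x y η) - h η = 0)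
    (δ : ℝ) (hδ : 0 < δ) :
    ∑ η : Config n d, h η * (om u y η - om u x η) * f η * bern u η
      ≤ δ * (n : ℝ) ^ 2 * (∑ η : Config n d,
              (Real.sqrt (f (swapC x y η)) - Real.sqrt (f η)) ^ 2 * bern u η)
        + (4 / (δ * ε₀ ^ 2 * (n : ℝ) ^ 2)) * (∑ η : Config n d, (h η) ^ 2 * f η * bern u η)
        - (u y - u x) * ∑ η : Config n d, h η * om u x η * om u y η * f η * bern u η :=
  ibp_combined_general n d ε₀ hε₀ u hu x y f hf h hh δ hδ
end

section
/- Let μ be a probability measure on a finite set Ω with μ(x) > 0 for all x ∈ Ω, and let f be a density with respect to μ. Then for any A ⊆ Ω with 0 < μ(A) < 1, ∫_A f dμ ≤ ( H(f;μ) + log 2 ) / log( 1/μ(A) ). -/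
open Finset Real

private lemma tangent_mul_log (x t : ℝ) (hx : 0 ≤ x) (ht : 0 < t) :
    x * Real.log t + x - t ≤ x * Real.log x := by
  rcases hx.eq_or_lt with h | h
  · simp [← h]; linarith
  · have hlog : Real.log (t / x) ≤ t / x - 1 :=
      Real.log_le_sub_one_of_pos (div_pos ht h)
    rw [Real.log_div ht.ne' h.ne'] at hlog
    have := mul_le_mul_of_nonneg_left hlog h.le
    have hx' : x * (t / x - 1) = t - x := by field_simp
    nlinarith

private lemma half_bound (p : ℝ) (h0 : 0 ≤ p) :
    p - 1/2 - p * Real.log 2 ≤ p * Real.log p := by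
  have := tangent_mul_log p (1/2) h0 (by norm_num)
  rw [show (1:ℝ)/2 = 2⁻¹ by norm_num, Real.log_inv] at this
  linarith

/-- Gibbs-type lower bound on a partial entropy sum. -/
private lemma partial_sum_bound {Ω : Type*} [Fintype Ω] (μ : Ω → ℝ)
    (hμpos : ∀ x, 0 < μ x) (f : Ω → ℝ) (hf : ∀ x, 0 ≤ f x)
    (s : Finset Ω) (t : ℝ) (ht : 0 < t) :
    (∑ x ∈ s, f x * μ x) * Real.log t + (∑ x ∈ s, f x * μ x) - t * (∑ x ∈ s, μ x)
      ≤ ∑ x ∈ s, f x * Real.log (f x) * μ x := by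
  have : ∀ x ∈ s, f x * μ x * Real.log t + f x * μ x - t * μ x
      ≤ f x * Real.log (f x) * μ x := by
    intro x _
    have h := tangent_mul_log (f x) t (hf x) ht
    have hm := (hμpos x).le
    nlinarith [mul_le_mul_of_nonneg_right h hm]
  calc (∑ x ∈ s, f x * μ x) * Real.log t + (∑ x ∈ s, f x * μ x) - t * (∑ x ∈ s, μ x)
      = ∑ x ∈ s, (f x * μ x * Real.log t + f x * μ x - t * μ x) := by
        rw [Finset.sum_sub_distrib, Finset.sum_add_distrib, ← Finset.sum_mul,
          ← Finset.mul_sum]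
    _ ≤ _ := Finset.sum_le_sum this

/-- Entropy bound for events on a finite probability space: for `A ⊆ Ω` with `0 < μ(A) < 1`,
`∫_A f dμ ≤ (H(f;μ) + log 2)/log(1/μ(A))`. -/
theorem entropy_event_bound {Ω : Type*} [Fintype Ω]
    (μ : Ω → ℝ) (hμpos : ∀ x, 0 < μ x) (hμ1 : ∑ x, μ x = 1)
    (f : Ω → ℝ) (hf : ∀ x, 0 ≤ f x) (hf1 : ∑ x, f x * μ x = 1)
    (A : Finset Ω) (hA0 : 0 < ∑ x ∈ A, μ x) (hA1 : ∑ x ∈ A, μ x < 1) :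
    ∑ x ∈ A, f x * μ x
      ≤ ((∑ x, f x * Real.log (f x) * μ x) + Real.log 2)
          / Real.log (1 / ∑ x ∈ A, μ x) := by
  classical
  set a := ∑ x ∈ A, μ x with ha
  set p := ∑ x ∈ A, f x * μ x with hp
  set H := ∑ x, f x * Real.log (f x) * μ x with hH
  have hsplitμ : ∑ x ∈ A, μ x + ∑ x ∈ Aᶜ, μ x = 1 := by
    rw [Finset.sum_add_sum_compl]; exact hμ1
  have hsplitf : ∑ x ∈ A, f x * μ x + ∑ x ∈ Aᶜ, f x * μ x = 1 := by
    rw [Finset.sum_add_sum_compl]; exact hf1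
  have hsplitH : ∑ x ∈ A, f x * Real.log (f x) * μ x
      + ∑ x ∈ Aᶜ, f x * Real.log (f x) * μ x = H := by
    rw [Finset.sum_add_sum_compl]
  have hb : ∑ x ∈ Aᶜ, μ x = 1 - a := by linarith
  have hq : ∑ x ∈ Aᶜ, f x * μ x = 1 - p := by linarith
  set b := 1 - a with hbdef
  set q := 1 - p with hqdef
  have hbpos : 0 < b := by simp [hbdef]; linarith
  have hp0 : 0 ≤ p := Finset.sum_nonneg fun x _ => mul_nonneg (hf x) (hμpos x).le
  have hq0 : 0 ≤ q := by
    rw [← hq]; exact Finset.sum_nonneg fun x _ => mul_nonneg (hf x) (hμpos x).le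
  -- denominator positive
  have hlogpos : 0 < Real.log (1 / a) := by
    rw [one_div, Real.log_inv]
    have := Real.log_neg hA0 hA1
    linarith
  rw [le_div_iff₀ hlogpos]
  rw [one_div, Real.log_inv]
  -- goal : p * (-Real.log a) ≤ H + Real.log 2  (after rewriting)
  -- Lower bound for the sum on A
  have hAbound : p * Real.log p - p * Real.log a ≤ ∑ x ∈ A, f x * Real.log (f x) * μ x := by
    rcases hp0.eq_or_lt with h | h
    · have hfz : ∀ x ∈ A, f x * μ x = 0 := by
        intro x hx
        have hz : ∑ y ∈ A, f y * μ y = 0 := by rw [← hp, ← h]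
        exact (Finset.sum_eq_zero_iff_of_nonneg
          (fun y _ => mul_nonneg (hf y) (hμpos y).le)).mp hz x hx
      have hzero : ∑ x ∈ A, f x * Real.log (f x) * μ x = 0 := by
        apply Finset.sum_eq_zero
        intro x hx
        have hfx : f x = 0 := by
          rcases mul_eq_zero.mp (hfz x hx) with h1 | h1
          · exact h1
          · exact absurd h1 (hμpos x).ne'
        simp [hfx]
      rw [hzero, ← h]; simp
    · have := partial_sum_bound μ hμpos f hf A (p / a) (div_pos h hA0)
      rw [Real.log_div h.ne' hA0.ne'] at this
      have hcalc : (p / a) * a = p := by field_simp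
      calc p * Real.log p - p * Real.log a
          = p * (Real.log p - Real.log a) + p - (p / a) * a := by rw [hcalc]; ring
        _ ≤ _ := this
  have hCbound : q * Real.log q - q * Real.log b ≤ ∑ x ∈ Aᶜ, f x * Real.log (f x) * μ x := by
    rcases hq0.eq_or_lt with h | h
    · have hfz : ∀ x ∈ Aᶜ, f x * μ x = 0 := by
        intro x hx
        have : ∑ y ∈ Aᶜ, f y * μ y = 0 := by rw [hq, ← h]
        exact (Finset.sum_eq_zero_iff_of_nonneg
          (fun y _ => mul_nonneg (hf y) (hμpos y).le)).mp this x hx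
      have : ∑ x ∈ Aᶜ, f x * Real.log (f x) * μ x = 0 := by
        apply Finset.sum_eq_zero
        intro x hx
        have hfx : f x = 0 := by
          have := hfz x hx
          rcases mul_eq_zero.mp this with h1 | h1
          · exact h1
          · exact absurd h1 (hμpos x).ne'
        simp [hfx]
      rw [this, ← h]; simp
    · have := partial_sum_bound μ hμpos f hf Aᶜ (q / b) (div_pos h hbpos)
      rw [Real.log_div h.ne' hbpos.ne', hq, hb] at this
      have hcalc : (q / b) * b = q := by field_simp
      calc q * Real.log q - q * Real.log b
          = q * (Real.log q - Real.log b) + q - (q / b) * b := by rw [hcalc]; ring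
        _ ≤ _ := this
  -- binary entropy bound
  have hbin : -Real.log 2 ≤ p * Real.log p + q * Real.log q := by
    have h1 := half_bound p hp0
    have h2 := half_bound q hq0
    have hpq : p + q = 1 := by simp [hqdef]
    have h3 : p * Real.log 2 + q * Real.log 2 = Real.log 2 := by
      calc p * Real.log 2 + q * Real.log 2 = (p + q) * Real.log 2 := by ring
        _ = Real.log 2 := by rw [hpq, one_mul]
    clear_value p q
    linarith
  -- q * log b ≤ 0
  have hqb : q * Real.log b ≤ 0 := by
    apply mul_nonpos_of_nonneg_of_nonpos hq0
    apply Real.log_nonpos hbpos.le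
    simp [hbdef]; linarith
  nlinarith [hAbound, hCbound, hbin, hqb, hsplitH]
end

section
/- (Yau's inequality for finite-state Markov dynamics.) Let Ω be a finite set, r : Ω × Ω → [0,∞) with r(x,x) = 0, and define L g(x) := Σ_y r(x,y)(g(y) − g(x)) and Γ g(x) := Σ_y r(x,y)(g(y) − g(x))². Let ν be a probability measure on Ω with ν(x) > 0 for all x, and let L* denote the adjoint of L in L²(ν). Let T > 0 and let t ↦ μ_t, t ∈ [0,T], be a family of probability measures on Ω with μ_t(x) > 0 for all x, differentiable in t; set ψ_t(x) := μ_t(x)/ν(x). Let t ↦ f_t : Ω → (0,∞) be differentiable in t, with ∫ f_t dμ_t = 1 for all t, and suppose the forward Fokker–Planck equation holds: d/dt ( f_t(x) ψ_t(x) ) = L*( f_t ψ_t )(x) for all x ∈ Ω and t ∈ [0,T]. Define H(t) := ∫ f_t log f_t dμ_t. Then for every t ∈ [0,T], H'(t) ≤ − ∫ Γ(√f_t) dμ_t + ∫ ( L_t* 1 − d/dt log ψ_t ) f_t dμ_t, where L_t* 1 (x) := Σ_y ( r(y,x) μ_t(y)/μ_t(x) − r(x,y) ). -/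
/-!
Differentiating `H(t) = ∑ f log f μ` and using that the mass `∑ f μ` is constant gives
`H' = ∑ log f · (f μ)' - ∫ f μ'`; the Fokker–Planck equation and the adjoint relation turn
the first sum into `∫ f L(log f) dμ`. The pointwise inequality
`a (log b - log a) ≤ (b - a) - (√b - √a)²` (from `log x ≤ x - 1` at `x = √(b/a)`) bounds
`f L(log f)` by `L f - Γ(√f)`, and summing `L f` against `μ` by parts produces `L_t* 1`.
-/

open Finset Real

theorem mul_log_sub_log_le {a b : ℝ} (ha : 0 < a) (hb : 0 < b) :
    a * (log b - log a) ≤ b - a - (√b - √a) ^ 2 := by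
  obtain ⟨s, hs, rfl⟩ : ∃ s, 0 < s ∧ s ^ 2 = a := ⟨√a, sqrt_pos.2 ha, sq_sqrt ha.le⟩
  obtain ⟨v, hv, rfl⟩ : ∃ v, 0 < v ∧ v ^ 2 = b := ⟨√b, sqrt_pos.2 hb, sq_sqrt hb.le⟩
  have hlog : log (v / s) ≤ v / s - 1 := log_le_sub_one_of_pos (div_pos hv hs)
  rw [log_div hv.ne' hs.ne'] at hlog
  have hs_mul : s ^ 2 * (v / s) = s * v := by field_simp
  rw [log_pow, log_pow, sqrt_sq hs.le, sqrt_sq hv.le]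
  push_cast
  nlinarith [mul_le_mul_of_nonneg_left hlog (by positivity : (0 : ℝ) ≤ 2 * s ^ 2)]

theorem HasDerivAt.eq_zero_of_eqOn_Icc {g : ℝ → ℝ} {g' a b c t : ℝ} (hab : a < b)
    (ht : t ∈ Set.Icc a b) (hg : Set.EqOn g (fun _ => c) (Set.Icc a b))
    (h : HasDerivAt g g' t) : g' = 0 :=
  (uniqueDiffOn_Icc hab t ht).eq_deriv _ h.hasDerivWithinAt
    ((hasDerivWithinAt_const t _ c).congr hg (hg ht))

namespace FiniteMarkov

variable {Ω : Type*} [Fintype Ω] (r : Ω → Ω → ℝ)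

def generator (g : Ω → ℝ) (x : Ω) : ℝ := ∑ y, r x y * (g y - g x)

def carreDuChamp (g : Ω → ℝ) (x : Ω) : ℝ := ∑ y, r x y * (g y - g x) ^ 2

theorem mul_generator_log_le (hr : ∀ x y, 0 ≤ r x y) {f : Ω → ℝ} (hf : ∀ x, 0 < f x)
    (x : Ω) :
    f x * generator r (fun y => log (f y)) x
      ≤ generator r f x - carreDuChamp r (fun y => √(f y)) x := by
  rw [generator, generator, carreDuChamp, mul_sum, ← sum_sub_distrib]
  refine sum_le_sum fun y _ => ?_
  calc f x * (r x y * (log (f y) - log (f x)))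
      = r x y * (f x * (log (f y) - log (f x))) := by ring
    _ ≤ r x y * (f y - f x - (√(f y) - √(f x)) ^ 2) :=
      mul_le_mul_of_nonneg_left (mul_log_sub_log_le (hf x) (hf y)) (hr x y)
    _ = r x y * (f y - f x) - r x y * (√(f y) - √(f x)) ^ 2 := by ring

theorem sum_generator_mul_eq {m : Ω → ℝ} (hm : ∀ x, m x ≠ 0) (g : Ω → ℝ) :
    ∑ x, generator r g x * m x = ∑ x, (∑ y, (r y x * m y / m x - r x y)) * g x * m x := by
  have hlhs : ∀ x, generator r g x * m x = ∑ y, (r x y * m x * g y - r x y * m x * g x) :=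
    fun x => by
      rw [generator, sum_mul]
      exact sum_congr rfl fun y _ => by ring
  have hrhs : ∀ x, (∑ y, (r y x * m y / m x - r x y)) * g x * m x
      = ∑ y, (r y x * m y * g x - r x y * m x * g x) := fun x => by
    rw [sum_mul, sum_mul]
    refine sum_congr rfl fun y _ => ?_
    field_simp [hm x]
  rw [sum_congr rfl fun x _ => hlhs x, sum_congr rfl fun x _ => hrhs x]
  simp only [sum_sub_distrib]
  rw [sum_comm (f := fun x y => r y x * m y * g x)]

theorem sum_mul_generator_log_mul_le (hr : ∀ x y, 0 ≤ r x y) {f m : Ω → ℝ}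
    (hf : ∀ x, 0 < f x) (hm : ∀ x, 0 < m x) :
    ∑ x, f x * generator r (fun y => log (f y)) x * m x
      ≤ -∑ x, carreDuChamp r (fun y => √(f y)) x * m x
        + ∑ x, (∑ y, (r y x * m y / m x - r x y)) * f x * m x := by
  calc ∑ x, f x * generator r (fun y => log (f y)) x * m x
      ≤ ∑ x, (generator r f x - carreDuChamp r (fun y => √(f y)) x) * m x :=
        sum_le_sum fun x _ => mul_le_mul_of_nonneg_right (mul_generator_log_le r hr hf x) (hm x).le
    _ = _ := by
        rw [← sum_generator_mul_eq r (fun x => (hm x).ne')]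
        simp only [sub_mul, sum_sub_distrib]
        ring

theorem hasDerivAt_sum_mul_log_mul {f μ : ℝ → Ω → ℝ} {f' μ' : Ω → ℝ} {t : ℝ}
    (hf : ∀ x, HasDerivAt (fun s => f s x) (f' x) t)
    (hμ : ∀ x, HasDerivAt (fun s => μ s x) (μ' x) t) (hf0 : ∀ x, f t x ≠ 0) :
    HasDerivAt (fun s => ∑ x, f s x * log (f s x) * μ s x)
      (∑ x, log (f t x) * (f' x * μ t x + f t x * μ' x) + ∑ x, f' x * μ t x) t := by
  rw [← sum_add_distrib]
  refine HasDerivAt.fun_sum fun x _ => ?_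
  refine (((hf x).fun_mul ((hf x).log (hf0 x))).fun_mul (hμ x)).congr_deriv ?_
  field_simp [hf0 x]
  ring

end FiniteMarkov

open FiniteMarkov in
theorem yau_inequality_general {Ω : Type*} [Fintype Ω]
    (r : Ω → Ω → ℝ) (hr : ∀ x y, 0 ≤ r x y)
    (ν : Ω → ℝ) (hνpos : ∀ x, 0 < ν x)
    (Lstar : (Ω → ℝ) → Ω → ℝ)
    (hadj : ∀ g h : Ω → ℝ,
      ∑ x, (∑ y, r x y * (g y - g x)) * h x * ν x = ∑ x, g x * Lstar h x * ν x)
    (T : ℝ) (hT : 0 < T)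
    (μ μ' : ℝ → Ω → ℝ)
    (hμpos : ∀ t ∈ Set.Icc 0 T, ∀ x, 0 < μ t x)
    (hμderiv : ∀ t ∈ Set.Icc 0 T, ∀ x, HasDerivAt (fun s => μ s x) (μ' t x) t)
    (f f' : ℝ → Ω → ℝ)
    (hfpos : ∀ t ∈ Set.Icc 0 T, ∀ x, 0 < f t x)
    (hf1 : ∀ t ∈ Set.Icc 0 T, ∑ x, f t x * μ t x = 1)
    (hfderiv : ∀ t ∈ Set.Icc 0 T, ∀ x, HasDerivAt (fun s => f s x) (f' t x) t)
    (hFP : ∀ t ∈ Set.Icc 0 T, ∀ x,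
      HasDerivAt (fun s => f s x * (μ s x / ν x))
        (Lstar (fun y => f t y * (μ t y / ν y)) x) t) :
    ∀ t ∈ Set.Icc 0 T,
      deriv (fun s => ∑ x, f s x * Real.log (f s x) * μ s x) t
        ≤ -(∑ x, (∑ y, r x y * (Real.sqrt (f t y) - Real.sqrt (f t x)) ^ 2) * μ t x)
          + ∑ x, ((∑ y, (r y x * μ t y / μ t x - r x y)) - μ' t x / μ t x)
              * f t x * μ t x := by
  intro t ht
  have hf := hfpos t ht
  have hμ := hμpos t ht
  have hflux : ∀ x, f' t x * μ t x + f t x * μ' t x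
      = Lstar (fun y => f t y * (μ t y / ν y)) x * ν x := fun x => by
    rw [← ((hfderiv t ht x).mul ((hμderiv t ht x).div_const (ν x))).unique (hFP t ht x)]
    field_simp [(hνpos x).ne']
  have hmass : ∑ x, (f' t x * μ t x + f t x * μ' t x) = 0 :=
    (HasDerivAt.fun_sum fun x _ => (hfderiv t ht x).mul (hμderiv t ht x)).eq_zero_of_eqOn_Icc
      hT ht hf1
  have hlog_flux : ∑ x, log (f t x) * (f' t x * μ t x + f t x * μ' t x)
      = ∑ x, f t x * generator r (fun y => log (f t y)) x * μ t x := by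
    simp only [hflux, ← mul_assoc]
    rw [← hadj]
    refine sum_congr rfl fun x _ => ?_
    rw [generator]
    field_simp [(hνpos x).ne']
  have hdrift : ∀ x,
      ((∑ y, (r y x * μ t y / μ t x - r x y)) - μ' t x / μ t x) * f t x * μ t x
        = (∑ y, (r y x * μ t y / μ t x - r x y)) * f t x * μ t x - f t x * μ' t x :=
    fun x => by field_simp [(hμ x).ne']
  rw [(hasDerivAt_sum_mul_log_mul (hfderiv t ht) (hμderiv t ht) fun x => (hf x).ne').deriv,
    hlog_flux, sum_congr rfl fun x _ => hdrift x, sum_sub_distrib]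
  rw [sum_add_distrib] at hmass
  have hbound := sum_mul_generator_log_mul_le r hr hf hμ
  simp only [carreDuChamp] at hbound
  linarith

/-- Yau's inequality for finite-state Markov dynamics: if `μ_t` are fully-supported
probability measures differentiable in `t`, `f_t` are positive densities w.r.t. `μ_t`
differentiable in `t`, and the forward Fokker–Planck equation
`d/dt(f_t ψ_t) = L*(f_t ψ_t)` holds (with `ψ_t = μ_t/ν` and `L*` the adjoint of `L` in
`L²(ν)`), then `H'(t) ≤ -∫ Γ(√f_t) dμ_t + ∫ (L_t* 1 - d/dt log ψ_t) f_t dμ_t`,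
where `L_t* 1(x) = Σ_y (r(y,x)μ_t(y)/μ_t(x) - r(x,y))` and `d/dt log ψ_t = μ_t'/μ_t`. -/
theorem yau_inequality {Ω : Type*} [Fintype Ω]
    (r : Ω → Ω → ℝ) (hr : ∀ x y, 0 ≤ r x y) (hrdiag : ∀ x, r x x = 0)
    (ν : Ω → ℝ) (hνpos : ∀ x, 0 < ν x) (hν1 : ∑ x, ν x = 1)
    (Lstar : (Ω → ℝ) → Ω → ℝ)
    (hadj : ∀ g h : Ω → ℝ,
      ∑ x, (∑ y, r x y * (g y - g x)) * h x * ν x = ∑ x, g x * Lstar h x * ν x)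
    (T : ℝ) (hT : 0 < T)
    (μ μ' : ℝ → Ω → ℝ)
    (hμpos : ∀ t ∈ Set.Icc 0 T, ∀ x, 0 < μ t x)
    (hμ1 : ∀ t ∈ Set.Icc 0 T, ∑ x, μ t x = 1)
    (hμderiv : ∀ t ∈ Set.Icc 0 T, ∀ x, HasDerivAt (fun s => μ s x) (μ' t x) t)
    (f f' : ℝ → Ω → ℝ)
    (hfpos : ∀ t ∈ Set.Icc 0 T, ∀ x, 0 < f t x)
    (hf1 : ∀ t ∈ Set.Icc 0 T, ∑ x, f t x * μ t x = 1)
    (hfderiv : ∀ t ∈ Set.Icc 0 T, ∀ x, HasDerivAt (fun s => f s x) (f' t x) t)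
    (hFP : ∀ t ∈ Set.Icc 0 T, ∀ x,
      HasDerivAt (fun s => f s x * (μ s x / ν x))
        (Lstar (fun y => f t y * (μ t y / ν y)) x) t) :
    ∀ t ∈ Set.Icc 0 T,
      deriv (fun s => ∑ x, f s x * Real.log (f s x) * μ s x) t
        ≤ -(∑ x, (∑ y, r x y * (Real.sqrt (f t y) - Real.sqrt (f t x)) ^ 2) * μ t x)
          + ∑ x, ((∑ y, (r y x * μ t y / μ t x - r x y)) - μ' t x / μ t x)
              * f t x * μ t x :=
  yau_inequality_general r hr ν hνpos Lstar hadj T hT μ μ' hμpos hμderiv f f' hfpos hf1 hfderiv hFP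
end
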